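/- arXiv:1104.3988 — 7 statements merged into one kernel-verified Lean document; each statement's English description precedes it below -/
import Mathlib

section
/- There exists an integer n₀ such that for all n ≥ n₀ the following holds: if F and G are nonempty families of subsets of [n] = {1,...,n} forming a cross-Sperner pair, then |F| + |G| ≤ 2^n − 2^⌈n/2⌉ − 2^⌊n/2⌋ + 2. -/
/-- A pair of families `(𝓕, 𝓖)` is cross-Sperner if there is no pair
`F ∈ 𝓕`, `G ∈ 𝓖` with `F ⊆ G` or `G ⊆ F`. -/
def CrossSperner (𝓕 𝓖 : Finset (Finset ℕ)) : Prop :=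
  ∀ F ∈ 𝓕, ∀ G ∈ 𝓖, ¬ F ⊆ G ∧ ¬ G ⊆ F

/-!
Induct on the ground set `X`, splitting off a point `a`. If both families have members with and
without `a`, the two sections (`memberSubfamily`, `nonMemberSubfamily`) are cross-Sperner pairs on
`X.erase a`, and `2 ^ ⌈n/2⌉ + 2 ^ ⌊n/2⌋` grows slowly enough for the two bounds to add up.

Otherwise, after swapping the families and complementing within `X` if necessary, no member of `𝓕`
contains `a`. Take `T ∈ 𝓕` of maximum size `t` and let `m = |X| - 1`. In the power set of
`X.erase a`, the family `𝓕`, the traces of `𝓖`, and the proper supersets of `T` are disjoint,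
while the members of `𝓖` avoiding `a` miss all `2 ^ t + 2 ^ (m - t) - 1` sets comparable with `T`.
Adding up gives `|𝓕| + |𝓖| + 2 ^ t + 2 ^ (m + 1 - t) ≤ 2 ^ (m + 1) + 2`, and `2 ^ t + 2 ^ (n - t)`
is smallest at `t = ⌊n/2⌋`.
-/

open Finset

lemma two_pow_half_add_two_pow_half_le {n k : ℕ} (hk : k ≤ n) :
    2 ^ ((n + 1) / 2) + 2 ^ (n / 2) ≤ 2 ^ k + 2 ^ (n - k) := by
  wlog hkn : k ≤ n / 2 generalizing k
  · have := this (Nat.sub_le n k) (by omega)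
    rwa [Nat.sub_sub_self hk, add_comm (2 ^ (n - k))] at this
  have hfloor : 2 ^ (n / 2) = 2 ^ k * 2 ^ (n / 2 - k) := by rw [← pow_add]; congr 1; omega
  have hcompl : 2 ^ (n - k) = 2 ^ ((n + 1) / 2) * 2 ^ (n / 2 - k) := by
    rw [← pow_add]; congr 1; omega
  have hle : 2 ^ k ≤ 2 ^ ((n + 1) / 2) := Nat.pow_le_pow_right two_pos (by omega)
  have hone : 1 ≤ 2 ^ (n / 2 - k) := Nat.one_le_two_pow
  rw [hfloor, hcompl]
  nlinarith

lemma two_pow_half_succ_add_two_le {n : ℕ} (hn : 1 ≤ n) :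
    2 ^ ((n + 1 + 1) / 2) + 2 ^ ((n + 1) / 2) + 2 ≤ 2 * (2 ^ ((n + 1) / 2) + 2 ^ (n / 2)) := by
  obtain ⟨k, rfl | rfl⟩ := Nat.even_or_odd' n
  · have : 2 ≤ 2 ^ k := Nat.le_self_pow (by omega) 2
    rw [show (2 * k + 1 + 1) / 2 = k + 1 by omega, show (2 * k + 1) / 2 = k by omega,
      show 2 * k / 2 = k by omega, pow_succ]
    omega
  · have : 1 ≤ 2 ^ k := Nat.one_le_two_pow
    rw [show (2 * k + 1 + 1 + 1) / 2 = k + 1 by omega, show (2 * k + 1 + 1) / 2 = k + 1 by omega,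
      show (2 * k + 1) / 2 = k by omega, pow_succ]
    omega

lemma card_add_card_add_card_le_card {α : Type*} [DecidableEq α] {A B C U : Finset α}
    (hA : A ⊆ U) (hB : B ⊆ U) (hC : C ⊆ U)
    (hAB : Disjoint A B) (hAC : Disjoint A C) (hBC : Disjoint B C) :
    #A + #B + #C ≤ #U := by
  rw [← card_union_of_disjoint hAB, ← card_union_of_disjoint (disjoint_union_left.2 ⟨hAC, hBC⟩)]
  exact card_le_card (union_subset (union_subset hA hB) hC)

namespace Finset

variable {α : Type*} [DecidableEq α] {𝓗 : Finset (Finset α)} {X : Finset α} {a : α}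

lemma memberSubfamily_nonempty_iff : (𝓗.memberSubfamily a).Nonempty ↔ ∃ A ∈ 𝓗, a ∈ A := by
  simp [memberSubfamily, filter_nonempty_iff]

lemma nonMemberSubfamily_nonempty_iff : (𝓗.nonMemberSubfamily a).Nonempty ↔ ∃ A ∈ 𝓗, a ∉ A :=
  filter_nonempty_iff

lemma memberSubfamily_subset_powerset_erase (h : 𝓗 ⊆ X.powerset) :
    𝓗.memberSubfamily a ⊆ (X.erase a).powerset := by
  intro A hA
  rw [mem_memberSubfamily] at hA
  exact mem_powerset.2 (subset_erase.2 ⟨(subset_insert a A).trans (mem_powerset.1 (h hA.1)), hA.2⟩)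

lemma nonMemberSubfamily_subset_powerset_erase (h : 𝓗 ⊆ X.powerset) :
    𝓗.nonMemberSubfamily a ⊆ (X.erase a).powerset := by
  intro A hA
  rw [mem_nonMemberSubfamily] at hA
  exact mem_powerset.2 (subset_erase.2 ⟨mem_powerset.1 (h hA.1), hA.2⟩)

lemma image_erase_subset_powerset_erase (h : 𝓗 ⊆ X.powerset) :
    𝓗.image (·.erase a) ⊆ (X.erase a).powerset := by
  simp only [subset_iff, forall_mem_image, mem_powerset]
  exact fun A hA => erase_subset_erase a (mem_powerset.1 (h hA))

lemma image_sdiff_subset_powerset : 𝓗.image (X \ ·) ⊆ X.powerset := by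
  simp only [subset_iff, forall_mem_image, mem_powerset]
  exact fun A _ => sdiff_subset

lemma card_image_sdiff (h : 𝓗 ⊆ X.powerset) : #(𝓗.image (X \ ·)) = #𝓗 :=
  card_image_of_injOn fun A hA B hB hAB => by
    rw [← sdiff_sdiff_eq_self (mem_powerset.1 (h hA)),
      ← sdiff_sdiff_eq_self (mem_powerset.1 (h hB))]
    exact congrArg (X \ ·) hAB

end Finset

lemma card_add_two_pow_add_two_pow_le {𝓖 : Finset (Finset ℕ)} {Y T : Finset ℕ}
    (hG : 𝓖 ⊆ Y.powerset) (hTY : T ⊆ Y) (h : CrossSperner {T} 𝓖) :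
    #𝓖 + 2 ^ #T + 2 ^ (#Y - #T) ≤ 2 ^ #Y + 1 := by
  have hcomp : ∀ G ∈ 𝓖, ¬ G ⊆ T ∧ ¬ T ⊆ G := fun G hG => (h T (mem_singleton_self T) G hG).symm
  have := card_add_card_add_card_le_card (U := Iic Y) (Iic_eq_powerset Y ▸ hG)
    (Iio_subset_Iic_self.trans (Iic_subset_Iic.2 hTY)) Icc_subset_Iic_self
    (disjoint_left.2 fun G hG hGT => (hcomp G hG).1 (mem_Iio.1 hGT).le)
    (disjoint_left.2 fun G hG hTG => (hcomp G hG).2 (mem_Icc.1 hTG).1)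
    (disjoint_left.2 fun S hST hTS => (mem_Iio.1 hST).not_ge (mem_Icc.1 hTS).1)
  rw [card_Iio_finset, card_Icc_finset hTY, card_Iic_finset] at this
  have : 1 ≤ 2 ^ #T := Nat.one_le_two_pow
  omega

lemma card_add_card_add_two_pow_le {𝓕 𝓗 : Finset (Finset ℕ)} {Y T : Finset ℕ}
    (hF : 𝓕 ⊆ Y.powerset) (hH : 𝓗 ⊆ Y.powerset) (hT : T ∈ 𝓕) (hTmax : ∀ S ∈ 𝓕, #S ≤ #T)
    (hFH : ∀ F ∈ 𝓕, ∀ H ∈ 𝓗, ¬ F ⊆ H) :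
    #𝓕 + #𝓗 + 2 ^ (#Y - #T) ≤ 2 ^ #Y + 1 := by
  have hTY : T ⊆ Y := mem_powerset.1 (hF hT)
  have := card_add_card_add_card_le_card (U := Iic Y) (Iic_eq_powerset Y ▸ hF)
    (Iic_eq_powerset Y ▸ hH) Ioc_subset_Iic_self
    (disjoint_left.2 fun S hSF hSH => hFH S hSF S hSH subset_rfl)
    (disjoint_left.2 fun S hSF hTS => (hTmax S hSF).not_gt (card_lt_card (mem_Ioc.1 hTS).1))
    (disjoint_left.2 fun S hSH hTS => hFH T hT S hSH (mem_Ioc.1 hTS).1.le)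
  rw [card_Ioc_finset hTY, card_Iic_finset] at this
  have : 1 ≤ 2 ^ (#Y - #T) := Nat.one_le_two_pow
  omega

namespace CrossSperner

variable {𝓕 𝓖 : Finset (Finset ℕ)} {X : Finset ℕ} {a : ℕ}

lemma symm (h : CrossSperner 𝓕 𝓖) : CrossSperner 𝓖 𝓕 :=
  fun G hG F hF => (h F hF G hG).symm

lemma mono {𝓕' 𝓖' : Finset (Finset ℕ)} (h : CrossSperner 𝓕 𝓖) (hF : 𝓕' ⊆ 𝓕) (hG : 𝓖' ⊆ 𝓖) :
    CrossSperner 𝓕' 𝓖' :=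
  fun F hF' G hG' => h F (hF hF') G (hG hG')

lemma disjoint (h : CrossSperner 𝓕 𝓖) : Disjoint 𝓕 𝓖 :=
  disjoint_left.2 fun S hF hG => (h S hF S hG).1 subset_rfl

lemma memberSubfamily (h : CrossSperner 𝓕 𝓖) :
    CrossSperner (𝓕.memberSubfamily a) (𝓖.memberSubfamily a) := by
  intro F hF G hG
  rw [mem_memberSubfamily] at hF hG
  exact ⟨fun hFG => (h _ hF.1 _ hG.1).1 (insert_subset_insert a hFG),
    fun hGF => (h _ hF.1 _ hG.1).2 (insert_subset_insert a hGF)⟩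

lemma nonMemberSubfamily (h : CrossSperner 𝓕 𝓖) :
    CrossSperner (𝓕.nonMemberSubfamily a) (𝓖.nonMemberSubfamily a) :=
  h.mono (filter_subset _ _) (filter_subset _ _)

lemma image_sdiff (h : CrossSperner 𝓕 𝓖) (hF : 𝓕 ⊆ X.powerset) (hG : 𝓖 ⊆ X.powerset) :
    CrossSperner (𝓕.image (X \ ·)) (𝓖.image (X \ ·)) := by
  simp only [CrossSperner, forall_mem_image]
  intro F hF' G hG'
  have hFX := mem_powerset.1 (hF hF')
  have hGX := mem_powerset.1 (hG hG')
  rw [sdiff_subset_sdiff_iff_subset hFX hGX, sdiff_subset_sdiff_iff_subset hGX hFX]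
  exact (h F hF' G hG').symm

lemma subset_powerset_erase_erase (h : CrossSperner 𝓕 𝓖) (hF : 𝓕 ⊆ X.powerset)
    (hG : 𝓖 ⊆ X.powerset) (hGne : 𝓖.Nonempty) : 𝓕 ⊆ (X.powerset.erase ∅).erase X := by
  obtain ⟨G, hG'⟩ := hGne
  intro A hA
  refine mem_erase.2 ⟨?_, mem_erase.2 ⟨?_, hF hA⟩⟩
  · rintro rfl
    exact (h _ hA G hG').2 (mem_powerset.1 (hG hG'))
  · rintro rfl
    exact (h _ hA G hG').1 (empty_subset G)

lemma card_add_card_add_two_le (h : CrossSperner 𝓕 𝓖) (hX : X.Nonempty)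
    (hF : 𝓕 ⊆ X.powerset) (hG : 𝓖 ⊆ X.powerset) (hFne : 𝓕.Nonempty) (hGne : 𝓖.Nonempty) :
    #𝓕 + #𝓖 + 2 ≤ 2 ^ #X := by
  have hunion : 𝓕 ∪ 𝓖 ⊆ (X.powerset.erase ∅).erase X :=
    union_subset (h.subset_powerset_erase_erase hF hG hGne)
      (h.symm.subset_powerset_erase_erase hG hF hFne)
  have hcard := card_le_card hunion
  rw [card_union_of_disjoint h.disjoint, card_erase_of_mem (mem_erase.2
      ⟨hX.ne_empty, mem_powerset_self X⟩), card_erase_of_mem (empty_mem_powerset X),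
    card_powerset] at hcard
  have : 2 ≤ 2 ^ #X := Nat.le_self_pow hX.card_pos.ne' 2
  omega

lemma card_add_card_add_le_of_forall_notMem (h : CrossSperner 𝓕 𝓖) (ha : a ∈ X)
    (hF : 𝓕 ⊆ X.powerset) (hG : 𝓖 ⊆ X.powerset) (hFne : 𝓕.Nonempty) (hFa : ∀ A ∈ 𝓕, a ∉ A) :
    #𝓕 + #𝓖 + (2 ^ ((#X + 1) / 2) + 2 ^ (#X / 2)) ≤ 2 ^ #X + 2 := by
  obtain ⟨T, hT, hTmax⟩ := exists_max_image 𝓕 card hFne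
  have hF' : 𝓕 ⊆ (X.erase a).powerset := fun A hA =>
    mem_powerset.2 (subset_erase.2 ⟨mem_powerset.1 (hF hA), hFa A hA⟩)
  have hTX : T ⊆ X.erase a := mem_powerset.1 (hF' hT)
  have htraces := card_add_card_add_two_pow_le hF' (image_erase_subset_powerset_erase hG) hT hTmax
    (by simp only [forall_mem_image]
        exact fun F hF G hG hFG => (h F hF G hG).1 (hFG.trans (erase_subset a G)))
  have hcomparable := card_add_two_pow_add_two_pow_le (nonMemberSubfamily_subset_powerset_erase hG)
    hTX (h.mono (singleton_subset_iff.2 hT) (filter_subset _ _))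
  have hsplit : #(𝓖.image (·.erase a)) + #(𝓖.memberSubfamily a ∩ 𝓖.nonMemberSubfamily a) = #𝓖 := by
    rw [← memberSubfamily_union_nonMemberSubfamily, card_union_add_card_inter,
      card_memberSubfamily_add_card_nonMemberSubfamily]
  have hinter : #(𝓖.memberSubfamily a ∩ 𝓖.nonMemberSubfamily a) ≤ #(𝓖.nonMemberSubfamily a) :=
    card_le_card inter_subset_right
  have hconvex := two_pow_half_add_two_pow_half_le (card_le_card (hTX.trans (erase_subset a X)))
  rw [← card_erase_add_one ha] at hconvex ⊢
  rw [Nat.sub_add_comm (card_le_card hTX), pow_succ] at hconvex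
  rw [pow_succ]
  omega

lemma card_add_card_add_le_of_forall_mem (h : CrossSperner 𝓕 𝓖) (ha : a ∈ X)
    (hF : 𝓕 ⊆ X.powerset) (hG : 𝓖 ⊆ X.powerset) (hFne : 𝓕.Nonempty) (hFa : ∀ A ∈ 𝓕, a ∈ A) :
    #𝓕 + #𝓖 + (2 ^ ((#X + 1) / 2) + 2 ^ (#X / 2)) ≤ 2 ^ #X + 2 := by
  have := (h.image_sdiff hF hG).card_add_card_add_le_of_forall_notMem ha
    image_sdiff_subset_powerset image_sdiff_subset_powerset (hFne.image _)
    (by simpa only [forall_mem_image, mem_sdiff, not_and, not_not] using fun A hA _ => hFa A hA)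
  rwa [card_image_sdiff hF, card_image_sdiff hG] at this

lemma card_add_card_add_le_of_not_nonempty (h : CrossSperner 𝓕 𝓖) (ha : a ∈ X)
    (hF : 𝓕 ⊆ X.powerset) (hG : 𝓖 ⊆ X.powerset) (hFne : 𝓕.Nonempty)
    (hFa : ¬ ((𝓕.memberSubfamily a).Nonempty ∧ (𝓕.nonMemberSubfamily a).Nonempty)) :
    #𝓕 + #𝓖 + (2 ^ ((#X + 1) / 2) + 2 ^ (#X / 2)) ≤ 2 ^ #X + 2 := by
  rw [memberSubfamily_nonempty_iff, nonMemberSubfamily_nonempty_iff, not_and_or] at hFa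
  push Not at hFa
  rcases hFa with hFa | hFa
  · exact h.card_add_card_add_le_of_forall_notMem ha hF hG hFne hFa
  · exact h.card_add_card_add_le_of_forall_mem ha hF hG hFne hFa

theorem card_add_card_add_le (h : CrossSperner 𝓕 𝓖) (hX : X.Nonempty)
    (hF : 𝓕 ⊆ X.powerset) (hG : 𝓖 ⊆ X.powerset) (hFne : 𝓕.Nonempty) (hGne : 𝓖.Nonempty) :
    #𝓕 + #𝓖 + (2 ^ ((#X + 1) / 2) + 2 ^ (#X / 2)) ≤ 2 ^ #X + 2 := by
  induction X using Finset.strongInduction generalizing 𝓕 𝓖 with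
  | H X ih =>
    obtain ⟨a, ha⟩ := hX
    by_cases hX₁ : #X = 1
    · have := h.card_add_card_add_two_le ⟨a, ha⟩ hF hG hFne hGne
      rw [hX₁] at this ⊢
      omega
    by_cases hFa : (𝓕.memberSubfamily a).Nonempty ∧ (𝓕.nonMemberSubfamily a).Nonempty; swap
    · exact h.card_add_card_add_le_of_not_nonempty ha hF hG hFne hFa
    by_cases hGa : (𝓖.memberSubfamily a).Nonempty ∧ (𝓖.nonMemberSubfamily a).Nonempty; swap
    · simpa only [add_comm #𝓕] using h.symm.card_add_card_add_le_of_not_nonempty ha hG hF hGne hGa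
    have hX' : (X.erase a).Nonempty := by
      rw [← card_pos, card_erase_of_mem ha]
      have := card_pos.2 ⟨a, ha⟩
      omega
    have hmem := ih _ (erase_ssubset ha) h.memberSubfamily hX'
      (memberSubfamily_subset_powerset_erase hF) (memberSubfamily_subset_powerset_erase hG)
      hFa.1 hGa.1
    have hnonmem := ih _ (erase_ssubset ha) h.nonMemberSubfamily hX'
      (nonMemberSubfamily_subset_powerset_erase hF) (nonMemberSubfamily_subset_powerset_erase hG)
      hFa.2 hGa.2
    have hstep := two_pow_half_succ_add_two_le hX'.card_pos
    rw [← card_memberSubfamily_add_card_nonMemberSubfamily a 𝓕,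
      ← card_memberSubfamily_add_card_nonMemberSubfamily a 𝓖, ← card_erase_add_one ha, pow_succ]
    omega

end CrossSperner

theorem cross_sperner_sum_bound :
    ∃ n₀ : ℕ, ∀ n : ℕ, n₀ ≤ n →
      ∀ 𝓕 𝓖 : Finset (Finset ℕ),
        𝓕 ⊆ (Finset.Icc 1 n).powerset → 𝓖 ⊆ (Finset.Icc 1 n).powerset →
        𝓕.Nonempty → 𝓖.Nonempty → CrossSperner 𝓕 𝓖 →
        𝓕.card + 𝓖.card ≤ 2 ^ n - 2 ^ ((n + 1) / 2) - 2 ^ (n / 2) + 2 := by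
  refine ⟨1, fun n hn 𝓕 𝓖 hF hG hFne hGne h => ?_⟩
  have := h.card_add_card_add_le (nonempty_Icc.2 hn) hF hG hFne hGne
  rw [Nat.card_Icc, Nat.add_sub_cancel] at this
  omega
end

section
/- Let n ≥ 2 and let S ⊆ [n] be a set with |S| = ⌈n/2⌉ or |S| = ⌊n/2⌋. Put F = {S} and G = {T ⊆ [n] : T ⊄ S is not a subset of S and S is not a subset of T} (i.e., all subsets of [n] that neither contain S nor are contained in S). Then F and G are nonempty, the pair (F,G) is cross-Sperner, and |F| + |G| = 2^n − 2^⌈n/2⌉ − 2^⌊n/2⌋ + 2. -/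
/-!
The sets comparable with `S` inside `A` are the subsets of `S` and the supersets of `S` in `A`,
two intervals of the Boolean lattice of sizes `2 ^ #S` and `2 ^ (#A - #S)` meeting only in `S`.
So `G` has `2 ^ n + 1 - 2 ^ #S - 2 ^ (n - #S)` members, and `[n] \ S` is one of them
as soon as `S` and its complement are nonempty.
-/

open Finset

namespace Finset

variable {α : Type*} [DecidableEq α] {A S : Finset α}

theorem filter_powerset_subset_or_superset (hS : S ⊆ A) :
    {T ∈ A.powerset | T ⊆ S ∨ S ⊆ T} = Iic S ∪ Icc S A := by
  ext T
  simp only [mem_filter, mem_powerset, mem_union, mem_Iic, mem_Icc]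
  constructor
  · rintro ⟨hTA, hTS | hST⟩
    exacts [.inl hTS, .inr ⟨hST, hTA⟩]
  · rintro (hTS | ⟨hST, hTA⟩)
    exacts [⟨hTS.trans hS, .inl hTS⟩, ⟨hTA, .inr hST⟩]

theorem card_filter_powerset_subset_or_superset (hS : S ⊆ A) :
    #{T ∈ A.powerset | T ⊆ S ∨ S ⊆ T} + 1 = 2 ^ #S + 2 ^ (#A - #S) := by
  have h_inter : Iic S ∩ Icc S A = {S} := by
    ext T
    simp only [mem_inter, mem_Iic, mem_Icc, mem_singleton]
    exact ⟨fun ⟨hTS, hST, _⟩ => hTS.antisymm hST, by rintro rfl; exact ⟨le_rfl, le_rfl, hS⟩⟩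
  rw [filter_powerset_subset_or_superset hS, ← card_Iic_finset, ← card_Icc_finset hS,
    ← card_union_add_card_inter, h_inter, card_singleton]

theorem card_filter_powerset_incomparable (hS : S ⊆ A) :
    #{T ∈ A.powerset | ¬T ⊆ S ∧ ¬S ⊆ T} + 2 ^ #S + 2 ^ (#A - #S) = 2 ^ #A + 1 := by
  have h := card_filter_add_card_filter_not (s := A.powerset) (fun T => T ⊆ S ∨ S ⊆ T)
  simp only [not_or, card_powerset] at h
  have := card_filter_powerset_subset_or_superset hS
  omega

theorem sdiff_not_subset_and_not_superset (hS : S.Nonempty) (hAS : (A \ S).Nonempty) :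
    ¬A \ S ⊆ S ∧ ¬S ⊆ A \ S :=
  ⟨fun h => hAS.ne_empty (sdiff_disjoint.eq_bot_of_le h),
    fun h => hS.ne_empty (disjoint_sdiff.eq_bot_of_le h)⟩

end Finset

theorem cross_sperner_extremal_construction (n : ℕ) (hn : 2 ≤ n)
    (S : Finset ℕ) (hS : S ⊆ Finset.Icc 1 n)
    (hScard : S.card = (n + 1) / 2 ∨ S.card = n / 2)
    (𝓕 𝓖 : Finset (Finset ℕ))
    (h𝓕 : 𝓕 = {S})
    (h𝓖 : 𝓖 = (Finset.Icc 1 n).powerset.filter (fun T => ¬ T ⊆ S ∧ ¬ S ⊆ T)) :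
    𝓕.Nonempty ∧ 𝓖.Nonempty ∧ CrossSperner 𝓕 𝓖 ∧
      𝓕.card + 𝓖.card = 2 ^ n - 2 ^ ((n + 1) / 2) - 2 ^ (n / 2) + 2 := by
  subst h𝓕 h𝓖
  have hA : #(Icc 1 n) = n := by simp
  have hS_ne : S.Nonempty := card_pos.mp (by omega)
  have hAS_ne : (Icc 1 n \ S).Nonempty := card_pos.mp (by rw [card_sdiff_of_subset hS]; omega)
  have h_mem : Icc 1 n \ S ∈ {T ∈ (Icc 1 n).powerset | ¬T ⊆ S ∧ ¬S ⊆ T} :=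
    mem_filter.mpr ⟨mem_powerset.mpr sdiff_subset, sdiff_not_subset_and_not_superset hS_ne hAS_ne⟩
  have h_pow : 2 ^ #S + 2 ^ (n - #S) = 2 ^ ((n + 1) / 2) + 2 ^ (n / 2) := by
    rcases hScard with h | h
    · rw [h, show n - (n + 1) / 2 = n / 2 by omega]
    · rw [h, show n - n / 2 = (n + 1) / 2 by omega, add_comm]
  refine ⟨singleton_nonempty S, ⟨_, h_mem⟩, ?_, ?_⟩
  · intro F hF G hG
    rw [mem_singleton.mp hF]
    exact (mem_filter.mp hG).2.symm
  · have h_count := card_filter_powerset_incomparable hS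
    -- nonemptiness of `𝓖` keeps the truncated subtractions in the target exact
    have h_pos := card_pos.mpr ⟨_, h_mem⟩
    rw [hA] at h_count
    rw [card_singleton]
    omega
end

section
/- There exists an integer n₀ such that for all n ≥ n₀ the following holds: if F and G are nonempty families of subsets of [n] forming a cross-Sperner pair and |F| + |G| = 2^n − 2^⌈n/2⌉ − 2^⌊n/2⌋ + 2, then there is a set S ⊆ [n] with |S| = ⌊n/2⌋ or |S| = ⌈n/2⌉ such that one of the two families equals {S} and the other equals the family of all subsets of [n] that are neither contained in S nor contain S. -/
/-!
Write `N = 2 ^ n`, and `l`, `u` (resp. `l'`, `u'`) for the sizes of the down-closure and of the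
up-closure of `𝓕` (resp. `𝓖`) in `[n]`. The Harris–Kleitman inequality gives `N |𝓕| ≤ l u` and
`N |𝓖| ≤ l' u'`, and the cross-Sperner property makes the down-closure of each family disjoint from
the up-closure of the other, so `l + u' ≤ N` and `l' + u ≤ N`. Together,
`N (2 (|𝓕| + |𝓖|) - N) ≤ (N - 2 l) (N - 2 u)`, and for the given value of `|𝓕| + |𝓖|` the left
side is positive. So one family, say `𝓕`, has `l, u < N / 2`. If the sizes of its members range
over `[a, b]`, then `l ≥ 2 ^ b` and `u ≥ 2 ^ (n - a)`, and the inequality becomes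
`2 ^ b + 2 ^ (n - a) + 2 ≤ 2 ^ ⌊n/2⌋ + 2 ^ ⌈n/2⌉ + 2 ^ (b - a + 1)`. This forces
`a = b ∈ {⌊n/2⌋, ⌈n/2⌉}` and then `l = 2 ^ b`, so `𝓕 = {S}`; counting the sets incomparable to `S`
shows that `𝓖` consists of all of them.
-/

open Finset

theorem pow_add_add_pow_le {x i k : ℕ} (d : ℕ) (hx : 1 ≤ x) (hik : i ≤ k) :
    x ^ (i + d) + x ^ k ≤ x ^ i + x ^ (k + d) := by
  have hd : 1 ≤ x ^ d := Nat.one_le_pow _ _ hx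
  have hi : x ^ i ≤ x ^ k := Nat.pow_le_pow_right hx hik
  rw [pow_add, pow_add]
  nlinarith

theorem pow_add_add_pow_lt {x i k d : ℕ} (hx : 1 < x) (hik : i < k) (hd : 0 < d) :
    x ^ (i + d) + x ^ k < x ^ i + x ^ (k + d) := by
  have hd : 1 < x ^ d := Nat.one_lt_pow hd.ne' hx
  have hi : x ^ i < x ^ k := Nat.pow_lt_pow_right hx hik
  rw [pow_add, pow_add]
  nlinarith

theorem two_pow_half_add_le (m : ℕ) {a : ℕ} (ha : a ≤ m) :
    2 ^ (m / 2) + 2 ^ ((m + 1) / 2) ≤ 2 ^ a + 2 ^ (m - a) := by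
  rcases le_or_gt a (m / 2) with h | h
  · convert pow_add_add_pow_le (m / 2 - a) one_le_two (show a ≤ (m + 1) / 2 by omega)
      using 3 <;> omega
  · rw [add_comm (2 ^ a)]
    convert pow_add_add_pow_le (a - (m + 1) / 2) one_le_two (show m - a ≤ (m + 1) / 2 by omega)
      using 3 <;> omega

theorem two_pow_half_add_lt (m : ℕ) {a : ℕ} (ha : a ≤ m) (h₁ : a ≠ m / 2)
    (h₂ : a ≠ (m + 1) / 2) :
    2 ^ (m / 2) + 2 ^ ((m + 1) / 2) < 2 ^ a + 2 ^ (m - a) := by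
  rcases le_or_gt a (m / 2) with h | h
  · convert pow_add_add_pow_lt (d := m / 2 - a) one_lt_two (show a < (m + 1) / 2 by omega)
      (by omega) using 3 <;> omega
  · rw [add_comm (2 ^ a)]
    convert pow_add_add_pow_lt (d := a - (m + 1) / 2) one_lt_two (show m - a < (m + 1) / 2 by omega)
      (by omega) using 3 <;> omega

theorem two_pow_add_two_pow_sub_eq_of_half {m a : ℕ} (ha : a = m / 2 ∨ a = (m + 1) / 2) :
    2 ^ a + 2 ^ (m - a) = 2 ^ (m / 2) + 2 ^ ((m + 1) / 2) := by
  rcases ha with rfl | rfl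
  · rw [show m - m / 2 = (m + 1) / 2 by omega]
  · rw [show m - (m + 1) / 2 = m / 2 by omega, add_comm]

theorem two_mul_two_pow_half_add_le {m : ℕ} (hm : 4 ≤ m) :
    2 * (2 ^ (m / 2) + 2 ^ ((m + 1) / 2)) ≤ 2 ^ m := by
  have h₁ : 2 ^ (m / 2) ≤ 2 ^ (m - 2) := Nat.pow_le_pow_right two_pos (by omega)
  have h₂ : 2 ^ ((m + 1) / 2) ≤ 2 ^ (m - 2) := Nat.pow_le_pow_right two_pos (by omega)
  have h₃ : 2 ^ m = 4 * 2 ^ (m - 2) := by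
    rw [show (4 : ℕ) = 2 ^ 2 by rfl, ← pow_add]; congr 1; omega
  omega

theorem eq_and_half_of_two_pow_le {m a b : ℕ} (hm : 4 ≤ m) (ha : 1 ≤ a) (hab : a ≤ b)
    (hb : b < m)
    (h : 2 ^ b + 2 ^ (m - a) + 2 ≤ 2 ^ (m / 2) + 2 ^ ((m + 1) / 2) + 2 ^ (b - a + 1)) :
    a = b ∧ (a = m / 2 ∨ a = (m + 1) / 2) := by
  have hB := two_mul_two_pow_half_add_le hm
  rcases hab.eq_or_lt with rfl | hab
  · refine ⟨rfl, ?_⟩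
    by_contra hmid
    have := two_pow_half_add_lt m hb.le (fun h' => hmid (.inl h')) (fun h' => hmid (.inr h'))
    rw [Nat.sub_self, zero_add, pow_one] at h
    omega
  exfalso
  rcases ha.eq_or_lt with rfl | ha
  · have h₁ : 2 ^ m = 2 * 2 ^ (m - 1) := by rw [← pow_succ']; congr 1; omega
    rw [Nat.sub_add_cancel (by omega)] at h
    omega
  · have h₁ : 2 ^ (b - a + 1) ≤ 2 ^ (b - 1) := Nat.pow_le_pow_right two_pos (by omega)
    have h₂ : 2 ^ (m - (b - 1)) ≤ 2 ^ (m - a) := Nat.pow_le_pow_right two_pos (by omega)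
    have h₃ : 2 ^ b = 2 * 2 ^ (b - 1) := by rw [← pow_succ']; congr 1; omega
    have h₄ := two_pow_half_add_le m (a := b - 1) (by omega)
    omega

section OrderedRing

variable {R : Type*} [CommRing R] [LinearOrder R] [IsStrictOrderedRing R] {N l u x y : R}

theorem sub_two_mul_mul_sub_two_mul_le (hl : 2 * l < N)
    (hP : 0 < (N - 2 * l) * (N - 2 * u)) (hx : x ≤ l) (hy : y ≤ u) :
    (N - 2 * l) * (N - 2 * u) ≤ (N - 2 * x) * (N - 2 * y) := by
  have hu : 0 < N - 2 * u := pos_of_mul_pos_right hP (by linarith)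
  exact mul_le_mul (by linarith) (by linarith) hu.le (by linarith)

theorem sub_two_mul_mul_sub_two_mul_lt (hl : 2 * l < N)
    (hP : 0 < (N - 2 * l) * (N - 2 * u)) (hx : x < l) (hy : y ≤ u) :
    (N - 2 * l) * (N - 2 * u) < (N - 2 * x) * (N - 2 * y) := by
  have hu : 0 < N - 2 * u := pos_of_mul_pos_right hP (by linarith)
  exact mul_lt_mul (by linarith) (by linarith) hu (by linarith)

end OrderedRing

namespace Finset

variable {α : Type*} [DecidableEq α] {s S : Finset α} {𝒜 ℬ : Finset (Finset α)}

def downClosure (𝒜 : Finset (Finset α)) : Finset (Finset α) := 𝒜.biUnion powerset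

def upClosureIn (s : Finset α) (𝒜 : Finset (Finset α)) : Finset (Finset α) :=
  𝒜.biUnion (Icc · s)

@[simp]
theorem mem_downClosure {T : Finset α} : T ∈ downClosure 𝒜 ↔ ∃ A ∈ 𝒜, T ⊆ A := by
  simp [downClosure]

@[simp]
theorem mem_upClosureIn {T : Finset α} : T ∈ upClosureIn s 𝒜 ↔ ∃ A ∈ 𝒜, A ⊆ T ∧ T ⊆ s := by
  simp [upClosureIn]

theorem isLowerSet_downClosure : IsLowerSet (downClosure 𝒜 : Set (Finset α)) := by
  intro T U hUT hT
  rw [mem_coe, mem_downClosure] at hT ⊢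
  obtain ⟨A, hA, hTA⟩ := hT
  exact ⟨A, hA, hUT.trans hTA⟩

theorem downClosure_subset_powerset (h𝒜 : 𝒜 ⊆ s.powerset) : downClosure 𝒜 ⊆ s.powerset := by
  intro T hT
  obtain ⟨A, hA, hTA⟩ := mem_downClosure.1 hT
  exact mem_powerset.2 (hTA.trans (mem_powerset.1 (h𝒜 hA)))

theorem upClosureIn_subset_powerset : upClosureIn s 𝒜 ⊆ s.powerset := by
  intro T hT
  obtain ⟨-, -, -, hTs⟩ := mem_upClosureIn.1 hT
  exact mem_powerset.2 hTs

theorem two_pow_card_le_card_downClosure {A : Finset α} (hA : A ∈ 𝒜) :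
    2 ^ #A ≤ #(downClosure 𝒜) := by
  rw [← card_powerset]
  exact card_le_card fun T hT => mem_downClosure.2 ⟨A, hA, mem_powerset.1 hT⟩

theorem two_pow_card_sub_le_card_upClosureIn {A : Finset α} (hA : A ∈ 𝒜) (hAs : A ⊆ s) :
    2 ^ (#s - #A) ≤ #(upClosureIn s 𝒜) := by
  rw [← card_Icc_finset hAs]
  exact card_le_card fun T hT => mem_upClosureIn.2 ⟨A, hA, (mem_Icc.1 hT)⟩

/-- The Harris–Kleitman inequality, relative to a ground set `s`. -/
theorem _root_.IsLowerSet.card_inter_le_finset' (h𝒜 : IsLowerSet (𝒜 : Set (Finset α)))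
    (h𝒜s : ∀ t ∈ 𝒜, t ⊆ s) (hℬs : ℬ ⊆ s.powerset)
    (hℬ : ∀ t ∈ ℬ, ∀ u, t ⊆ u → u ⊆ s → u ∈ ℬ) :
    2 ^ #s * #(𝒜 ∩ ℬ) ≤ #𝒜 * #ℬ := by
  have hcompl : IsLowerSet ((s.powerset \ ℬ : Finset (Finset α)) : Set (Finset α)) := by
    intro t u hut ht
    simp only [mem_coe, mem_sdiff, mem_powerset] at ht ⊢
    exact ⟨hut.trans ht.1, fun hu => ht.2 (hℬ u hu t hut ht.1)⟩
  have hHK := h𝒜.le_card_inter_finset' hcompl h𝒜s fun t ht => mem_powerset.1 (mem_sdiff.1 ht).1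
  have hinter : 𝒜 ∩ (s.powerset \ ℬ) = 𝒜 \ ℬ := by
    ext t
    simp only [mem_inter, mem_sdiff, mem_powerset]
    exact ⟨fun h => ⟨h.1, h.2.2⟩, fun h => ⟨h.1, h𝒜s t h.1, h.2⟩⟩
  have hℬcard : #ℬ ≤ 2 ^ #s := by simpa using card_le_card hℬs
  rw [hinter, card_sdiff_of_subset hℬs, card_powerset, ← card_inter_add_card_sdiff 𝒜 ℬ] at hHK
  rw [← card_inter_add_card_sdiff 𝒜 ℬ]
  zify [hℬcard] at hHK ⊢
  linarith

theorem two_pow_mul_card_le_card_downClosure_mul_card_upClosureIn (h𝒜 : 𝒜 ⊆ s.powerset) :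
    2 ^ #s * #𝒜 ≤ #(downClosure 𝒜) * #(upClosureIn s 𝒜) := by
  have hsub : 𝒜 ⊆ downClosure 𝒜 ∩ upClosureIn s 𝒜 := fun A hA =>
    mem_inter.2 ⟨mem_downClosure.2 ⟨A, hA, subset_rfl⟩,
      mem_upClosureIn.2 ⟨A, hA, subset_rfl, mem_powerset.1 (h𝒜 hA)⟩⟩
  refine (Nat.mul_le_mul_left _ (card_le_card hsub)).trans
    (isLowerSet_downClosure.card_inter_le_finset' ?_ upClosureIn_subset_powerset ?_)
  · exact fun t ht => mem_powerset.1 (downClosure_subset_powerset h𝒜 ht)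
  · intro t ht u htu hus
    obtain ⟨A, hA, hAt, -⟩ := mem_upClosureIn.1 ht
    exact mem_upClosureIn.2 ⟨A, hA, hAt.trans htu, hus⟩

theorem card_downClosure_add_card_upClosureIn_le (h𝒜 : 𝒜 ⊆ s.powerset)
    (h : ∀ A ∈ 𝒜, ∀ B ∈ ℬ, ¬ B ⊆ A) : #(downClosure 𝒜) + #(upClosureIn s ℬ) ≤ 2 ^ #s := by
  have hdisj : Disjoint (downClosure 𝒜) (upClosureIn s ℬ) := by
    refine disjoint_left.2 fun T hT hT' => ?_
    obtain ⟨A, hA, hTA⟩ := mem_downClosure.1 hT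
    obtain ⟨B, hB, hBT, -⟩ := mem_upClosureIn.1 hT'
    exact h A hA B hB (hBT.trans hTA)
  rw [← card_union_of_disjoint hdisj, ← card_powerset]
  exact card_le_card (union_subset (downClosure_subset_powerset h𝒜) upClosureIn_subset_powerset)

theorem card_filter_incomparable_add (hS : S ⊆ s) :
    #{T ∈ s.powerset | ¬ T ⊆ S ∧ ¬ S ⊆ T} + (2 ^ #S + 2 ^ (#s - #S)) = 2 ^ #s + 1 := by
  have hcomparable : {T ∈ s.powerset | ¬ (¬ T ⊆ S ∧ ¬ S ⊆ T)} = S.powerset ∪ Icc S s := by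
    ext T
    simp only [mem_filter, mem_powerset, mem_union, mem_Icc]
    constructor
    · rintro ⟨hTs, hcomp⟩
      by_cases hTS : T ⊆ S
      · exact .inl hTS
      · exact .inr ⟨not_not.1 fun h => hcomp ⟨hTS, h⟩, hTs⟩
    · rintro (hTS | ⟨hST, hTs⟩)
      · exact ⟨hTS.trans hS, fun h => h.1 hTS⟩
      · exact ⟨hTs, fun h => h.2 hST⟩
  have hinter : S.powerset ∩ Icc S s = {S} := by
    ext T
    simp only [mem_inter, mem_powerset, mem_Icc, mem_singleton]
    exact ⟨fun h => h.1.antisymm h.2.1, by rintro rfl; exact ⟨subset_rfl, subset_rfl, hS⟩⟩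
  have hsplit := card_filter_add_card_filter_not (s := s.powerset) (fun T => ¬ T ⊆ S ∧ ¬ S ⊆ T)
  have hunion := card_union_add_card_inter S.powerset (Icc S s)
  rw [hcomparable, card_powerset] at hsplit
  rw [hinter, card_singleton, card_powerset, card_Icc_finset hS] at hunion
  omega

theorem two_pow_mul_le_mul_of_incomparable (h𝒜 : 𝒜 ⊆ s.powerset) (hℬ : ℬ ⊆ s.powerset)
    (hcross : ∀ A ∈ 𝒜, ∀ B ∈ ℬ, ¬ A ⊆ B ∧ ¬ B ⊆ A) :
    (2 ^ #s : ℤ) * (2 * (#𝒜 + #ℬ) - 2 ^ #s) ≤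
      (2 ^ #s - 2 * #(downClosure 𝒜)) * (2 ^ #s - 2 * #(upClosureIn s 𝒜)) := by
  have k𝒜 := two_pow_mul_card_le_card_downClosure_mul_card_upClosureIn h𝒜
  have kℬ := two_pow_mul_card_le_card_downClosure_mul_card_upClosureIn hℬ
  have d𝒜 := card_downClosure_add_card_upClosureIn_le h𝒜 fun A hA B hB => (hcross A hA B hB).2
  have dℬ := card_downClosure_add_card_upClosureIn_le hℬ fun B hB A hA => (hcross A hA B hB).1
  zify at k𝒜 kℬ d𝒜 dℬ
  have hℬprod : (#(downClosure ℬ) * #(upClosureIn s ℬ) : ℤ) ≤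
      (2 ^ #s - #(upClosureIn s 𝒜)) * (2 ^ #s - #(downClosure 𝒜)) :=
    mul_le_mul (by linarith) (by linarith) (by positivity) (by linarith)
  linarith

theorem card_eq_and_half_of_mem (hm : 4 ≤ #s) (h𝒜 : 𝒜 ⊆ s.powerset) (hempty : ∅ ∉ 𝒜) (hs : s ∉ 𝒜)
    (hl : 2 * #(downClosure 𝒜) < 2 ^ #s)
    (hprod : (2 ^ #s : ℤ) * (2 ^ #s - 2 * (2 ^ (#s / 2) + 2 ^ ((#s + 1) / 2)) + 4) ≤
      (2 ^ #s - 2 * #(downClosure 𝒜)) * (2 ^ #s - 2 * #(upClosureIn s 𝒜)))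
    {A₀ A₁ : Finset α} (hA₀ : A₀ ∈ 𝒜) (hA₁ : A₁ ∈ 𝒜) (hcard : #A₀ ≤ #A₁) :
    #A₀ = #A₁ ∧ (#A₀ = #s / 2 ∨ #A₀ = (#s + 1) / 2) := by
  have hA₁s := mem_powerset.1 (h𝒜 hA₁)
  refine eq_and_half_of_two_pow_le hm
    (card_pos.2 (nonempty_iff_ne_empty.2 (ne_of_mem_of_not_mem hA₀ hempty))) hcard
    (card_lt_card (ssubset_of_subset_of_ne hA₁s (ne_of_mem_of_not_mem hA₁ hs))) ?_
  have hB := two_mul_two_pow_half_add_le hm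
  have hA₁card := card_le_card hA₁s
  zify at hl hB
  have hP := (mul_pos (by positivity) (by linarith)).trans_le hprod
  have hcorner := sub_two_mul_mul_sub_two_mul_le (x := 2 ^ #A₁) (y := 2 ^ (#s - #A₀)) hl hP
    (by exact_mod_cast two_pow_card_le_card_downClosure hA₁)
    (by exact_mod_cast two_pow_card_sub_le_card_upClosureIn hA₀ (mem_powerset.1 (h𝒜 hA₀)))
  have hexp : (2 : ℤ) ^ #A₁ * 2 ^ (#s - #A₀) = 2 ^ #s * 2 ^ (#A₁ - #A₀) := by
    rw [← pow_add, ← pow_add]; congr 1; omega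
  have hcorner' : (2 : ℤ) ^ #s * (2 ^ #s - 2 * (2 ^ (#s / 2) + 2 ^ ((#s + 1) / 2)) + 4) ≤
      2 ^ #s * (2 ^ #s - 2 * (2 ^ #A₁ + 2 ^ (#s - #A₀)) + 4 * 2 ^ (#A₁ - #A₀)) := by
    linear_combination hprod.trans hcorner + 4 * hexp
  have := le_of_mul_le_mul_left hcorner' (by positivity)
  zify
  rw [pow_succ]
  linarith

theorem card_downClosure_eq_two_pow_of_mem (hm : 4 ≤ #s) (h𝒜 : 𝒜 ⊆ s.powerset)
    (hl : 2 * #(downClosure 𝒜) < 2 ^ #s)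
    (hprod : (2 ^ #s : ℤ) * (2 ^ #s - 2 * (2 ^ (#s / 2) + 2 ^ ((#s + 1) / 2)) + 4) ≤
      (2 ^ #s - 2 * #(downClosure 𝒜)) * (2 ^ #s - 2 * #(upClosureIn s 𝒜)))
    {A : Finset α} (hA : A ∈ 𝒜) (hmid : #A = #s / 2 ∨ #A = (#s + 1) / 2) :
    #(downClosure 𝒜) = 2 ^ #A := by
  refine le_antisymm (not_lt.1 fun hlt => ?_) (two_pow_card_le_card_downClosure hA)
  have hB := two_mul_two_pow_half_add_le hm
  have hAs := mem_powerset.1 (h𝒜 hA)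
  have hAcard := card_le_card hAs
  have hhalf : (2 : ℤ) ^ #A + 2 ^ (#s - #A) = 2 ^ (#s / 2) + 2 ^ ((#s + 1) / 2) := by
    exact_mod_cast two_pow_add_two_pow_sub_eq_of_half hmid
  zify at hl hB hlt
  have hP := (mul_pos (by positivity) (by linarith)).trans_le hprod
  have hcorner := sub_two_mul_mul_sub_two_mul_lt (y := 2 ^ (#s - #A)) hl hP hlt
    (by exact_mod_cast two_pow_card_sub_le_card_upClosureIn hA hAs)
  have hexp : (2 : ℤ) ^ #A * 2 ^ (#s - #A) = 2 ^ #s := by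
    rw [← pow_add]; congr 1; omega
  nlinarith

theorem exists_eq_singleton_and_eq_incomparable (hm : 4 ≤ #s) (h𝒜 : 𝒜 ⊆ s.powerset)
    (hℬ : ℬ ⊆ s.powerset) (h𝒜ne : 𝒜.Nonempty) (hℬne : ℬ.Nonempty)
    (hcross : ∀ A ∈ 𝒜, ∀ B ∈ ℬ, ¬ A ⊆ B ∧ ¬ B ⊆ A)
    (hsum : #𝒜 + #ℬ + (2 ^ (#s / 2) + 2 ^ ((#s + 1) / 2)) = 2 ^ #s + 2)
    (hl : 2 * #(downClosure 𝒜) < 2 ^ #s) :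
    ∃ S ⊆ s, (#S = #s / 2 ∨ #S = (#s + 1) / 2) ∧
      𝒜 = {S} ∧ ℬ = {T ∈ s.powerset | ¬ T ⊆ S ∧ ¬ S ⊆ T} := by
  obtain ⟨B, hB⟩ := hℬne
  have hempty : ∅ ∉ 𝒜 := fun h => (hcross _ h B hB).1 (empty_subset B)
  have hs : s ∉ 𝒜 := fun h => (hcross _ h B hB).2 (mem_powerset.1 (hℬ hB))
  have hprod : (2 ^ #s : ℤ) * (2 ^ #s - 2 * (2 ^ (#s / 2) + 2 ^ ((#s + 1) / 2)) + 4) ≤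
      (2 ^ #s - 2 * #(downClosure 𝒜)) * (2 ^ #s - 2 * #(upClosureIn s 𝒜)) := by
    convert two_pow_mul_le_mul_of_incomparable h𝒜 hℬ hcross using 2
    zify at hsum
    linarith
  obtain ⟨S, hS⟩ := h𝒜ne
  have hSs := mem_powerset.1 (h𝒜 hS)
  have hmid := (card_eq_and_half_of_mem hm h𝒜 hempty hs hl hprod hS hS le_rfl).2
  have hdown : S.powerset = downClosure 𝒜 := by
    refine eq_of_subset_of_card_le (fun T hT => mem_downClosure.2 ⟨S, hS, mem_powerset.1 hT⟩) ?_
    rw [card_downClosure_eq_two_pow_of_mem hm h𝒜 hl hprod hS hmid, card_powerset]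
  have h𝒜S : 𝒜 = {S} := by
    refine eq_singleton_iff_unique_mem.2 ⟨hS, fun A hA => ?_⟩
    have hAS : A ⊆ S := mem_powerset.1 (hdown ▸ mem_downClosure.2 ⟨A, hA, subset_rfl⟩)
    exact eq_of_subset_of_card_le hAS
      (card_eq_and_half_of_mem hm h𝒜 hempty hs hl hprod hA hS (card_le_card hAS)).1.ge
  refine ⟨S, hSs, hmid, h𝒜S, eq_of_subset_of_card_le ?_ ?_⟩
  · exact fun T hT => mem_filter.2 ⟨hℬ hT, (hcross S hS T hT).2, (hcross S hS T hT).1⟩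
  · have := card_filter_incomparable_add hSs
    rw [two_pow_add_two_pow_sub_eq_of_half hmid] at this
    rw [h𝒜S, card_singleton] at hsum
    omega

theorem two_mul_card_downClosure_lt_or (h𝒜 : 𝒜 ⊆ s.powerset) (hℬ : ℬ ⊆ s.powerset)
    (hcross : ∀ A ∈ 𝒜, ∀ B ∈ ℬ, ¬ A ⊆ B ∧ ¬ B ⊆ A) (hsum : 2 ^ #s < 2 * (#𝒜 + #ℬ)) :
    2 * #(downClosure 𝒜) < 2 ^ #s ∨ 2 * #(downClosure ℬ) < 2 ^ #s := by
  refine or_iff_not_imp_left.2 fun h𝒜l => ?_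
  have hdisj := card_downClosure_add_card_upClosureIn_le hℬ fun B hB A hA => (hcross A hA B hB).1
  zify at h𝒜l hsum hdisj ⊢
  have hP := (mul_pos (by positivity) (by linarith)).trans_le
    (two_pow_mul_le_mul_of_incomparable h𝒜 hℬ hcross)
  have hu := neg_of_mul_pos_right hP (by linarith)
  linarith

end Finset

theorem cross_sperner_sum_uniqueness :
    ∃ n₀ : ℕ, ∀ n : ℕ, n₀ ≤ n →
      ∀ 𝓕 𝓖 : Finset (Finset ℕ),
        𝓕 ⊆ (Finset.Icc 1 n).powerset → 𝓖 ⊆ (Finset.Icc 1 n).powerset →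
        𝓕.Nonempty → 𝓖.Nonempty → CrossSperner 𝓕 𝓖 →
        𝓕.card + 𝓖.card = 2 ^ n - 2 ^ ((n + 1) / 2) - 2 ^ (n / 2) + 2 →
        ∃ S : Finset ℕ, S ⊆ Finset.Icc 1 n ∧
          (S.card = n / 2 ∨ S.card = (n + 1) / 2) ∧
          ((𝓕 = {S} ∧
              𝓖 = (Finset.Icc 1 n).powerset.filter (fun T => ¬ T ⊆ S ∧ ¬ S ⊆ T)) ∨
           (𝓖 = {S} ∧
              𝓕 = (Finset.Icc 1 n).powerset.filter (fun T => ¬ T ⊆ S ∧ ¬ S ⊆ T))) := by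
  refine ⟨4, fun n hn 𝓕 𝓖 h𝓕 h𝓖 h𝓕ne h𝓖ne hcross hsum => ?_⟩
  have hs : #(Icc 1 n) = n := by simp
  have hm : 4 ≤ #(Icc 1 n) := by omega
  have hB := two_mul_two_pow_half_add_le hm
  have hsum' : #𝓕 + #𝓖 + (2 ^ (#(Icc 1 n) / 2) + 2 ^ ((#(Icc 1 n) + 1) / 2)) =
      2 ^ #(Icc 1 n) + 2 := by
    rw [hs] at hB ⊢
    omega
  have hcross' : ∀ G ∈ 𝓖, ∀ F ∈ 𝓕, ¬ G ⊆ F ∧ ¬ F ⊆ G :=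
    fun G hG F hF => (hcross F hF G hG).symm
  rcases two_mul_card_downClosure_lt_or h𝓕 h𝓖 hcross (by omega) with h | h
  · obtain ⟨S, hSs, hmid, h𝓕S, h𝓖S⟩ :=
      exists_eq_singleton_and_eq_incomparable hm h𝓕 h𝓖 h𝓕ne h𝓖ne hcross hsum' h
    exact ⟨S, hSs, hs ▸ hmid, .inl ⟨h𝓕S, h𝓖S⟩⟩
  · obtain ⟨S, hSs, hmid, h𝓖S, h𝓕S⟩ :=
      exists_eq_singleton_and_eq_incomparable hm h𝓖 h𝓕 h𝓖ne h𝓕ne hcross' (by omega) h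
    exact ⟨S, hSs, hs ▸ hmid, .inr ⟨h𝓖S, h𝓕S⟩⟩
end

section
/- If n ≥ 2 and F, G are families of subsets of [n] forming a cross-Sperner pair, then |F| · |G| ≤ 2^(2n−4). -/
lemma cross_sperner_int_aux (N u d i c A B M : ℤ)
    (hA0 : 0 ≤ A) (hB0 : 0 ≤ B) (hu0 : 0 ≤ u) (hd0 : 0 ≤ d) (hi0 : 0 ≤ i) (hc0 : 0 ≤ c)
    (hN0 : 0 < N) (hAi : A ≤ i) (hBc : B ≤ c) (huN : u ≤ N) (hdN : d ≤ N)
    (hKz : (N - u) * d ≤ N * (d - i)) (hcEq : c + u + d = N + i)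
    (h16 : 16 * M = N * N) : A * B ≤ M := by
  have hiN : i * N ≤ u * d := by nlinarith [hKz]
  have hcN : c * N ≤ (N - u) * (N - d) := by nlinarith [hiN, hcEq]
  have hAM1 : 4 * (u * (N - u)) ≤ N * N := by nlinarith [sq_nonneg (N - 2 * u)]
  have hAM2 : 4 * (d * (N - d)) ≤ N * N := by nlinarith [sq_nonneg (N - 2 * d)]
  have hICN : i * c * (N * N) ≤ (u * d) * ((N - u) * (N - d)) := by
    calc i * c * (N * N) = (i * N) * (c * N) := by ring
    _ ≤ (u * d) * ((N - u) * (N - d)) :=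
        mul_le_mul hiN hcN (mul_nonneg hc0 hN0.le) (mul_nonneg hu0 hd0)
  have hquad : 16 * ((u * d) * ((N - u) * (N - d))) ≤ (N * N) * (N * N) := by
    have := mul_le_mul hAM1 hAM2
      (by nlinarith [hd0, hdN] : (0:ℤ) ≤ 4 * (d * (N - d)))
      (by positivity : (0:ℤ) ≤ N * N)
    nlinarith [this]
  have hIC : i * c ≤ M := by
    have h16' : (16 * (i * c)) * (N * N) ≤ (16 * M) * (N * N) := by
      calc (16 * (i * c)) * (N * N) = 16 * (i * c * (N * N)) := by ring
      _ ≤ 16 * ((u * d) * ((N - u) * (N - d))) := by linarith [hICN]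
      _ ≤ (N * N) * (N * N) := hquad
      _ = (16 * M) * (N * N) := by rw [h16]
    have hNN : (0:ℤ) < N * N := by positivity
    have := le_of_mul_le_mul_right h16' hNN
    linarith
  exact le_trans (mul_le_mul hAi hBc hB0 hi0) hIC

theorem cross_sperner_product_bound (n : ℕ) (hn : 2 ≤ n)
    (𝓕 𝓖 : Finset (Finset ℕ))
    (h𝓕 : 𝓕 ⊆ (Finset.Icc 1 n).powerset) (h𝓖 : 𝓖 ⊆ (Finset.Icc 1 n).powerset)
    (h : CrossSperner 𝓕 𝓖) :
    𝓕.card * 𝓖.card ≤ 2 ^ (2 * n - 4) := by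
  classical
  set s : Finset ℕ := Finset.Icc 1 n with hs
  have hscard : s.card = n := by simp [hs]
  set U : Finset (Finset ℕ) := s.powerset.filter (fun T => ∃ F ∈ 𝓕, F ⊆ T) with hU
  set D : Finset (Finset ℕ) := s.powerset.filter (fun T => ∃ F ∈ 𝓕, T ⊆ F) with hD
  set Uc : Finset (Finset ℕ) := s.powerset \ U with hUc
  have hUsub : U ⊆ s.powerset := Finset.filter_subset _ _
  have hDsub : D ⊆ s.powerset := Finset.filter_subset _ _
  -- D is a lower set
  have hDlow : IsLowerSet (D : Set (Finset ℕ)) := by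
    intro a b hba ha
    simp only [Finset.mem_coe, hD, Finset.mem_filter, Finset.mem_powerset] at ha ⊢
    obtain ⟨has, F, hF, haF⟩ := ha
    exact ⟨hba.trans has, F, hF, hba.trans haF⟩
  -- the complement of U within the powerset is a lower set
  have hUclow : IsLowerSet (Uc : Set (Finset ℕ)) := by
    intro a b hba ha
    simp only [Finset.mem_coe, hUc, Finset.mem_sdiff, hU, Finset.mem_filter,
      Finset.mem_powerset] at ha ⊢
    obtain ⟨has, hnotU⟩ := ha
    refine ⟨hba.trans has, ?_⟩
    rintro ⟨-, F, hF, hFb⟩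
    exact hnotU ⟨has, F, hF, hFb.trans hba⟩
  -- Harris–Kleitman
  have hK : Uc.card * D.card ≤ 2 ^ s.card * (Uc ∩ D).card := by
    refine hUclow.le_card_inter_finset' hDlow (fun t ht => ?_) (fun t ht => ?_)
    · have := (Finset.mem_sdiff.mp ht).1
      exact Finset.mem_powerset.mp this
    · exact Finset.mem_powerset.mp (hDsub ht)
  have hUcD : Uc ∩ D = D \ U := by
    ext t
    simp only [hUc, Finset.mem_inter, Finset.mem_sdiff]
    constructor
    · rintro ⟨⟨-, htU⟩, htD⟩; exact ⟨htD, htU⟩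
    · rintro ⟨htD, htU⟩; exact ⟨⟨hDsub htD, htU⟩, htD⟩
  -- card bookkeeping
  have hNpow : s.powerset.card = 2 ^ n := by
    rw [Finset.card_powerset, hscard]
  have hUcCard : Uc.card + U.card = 2 ^ n := by
    rw [hUc, Finset.card_sdiff_add_card_eq_card hUsub, hNpow]
  have hDUCard : (D \ U).card + (U ∩ D).card = D.card := by
    rw [Finset.inter_comm]
    exact Finset.card_sdiff_add_card_inter D U
  -- 𝓕 ⊆ U ∩ D
  have hFsub : 𝓕 ⊆ U ∩ D := by
    intro F hF
    have hFs : F ∈ s.powerset := h𝓕 hF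
    simp only [Finset.mem_inter, hU, hD, Finset.mem_filter]
    exact ⟨⟨hFs, F, hF, subset_rfl⟩, ⟨hFs, F, hF, subset_rfl⟩⟩
  have hFle : 𝓕.card ≤ (U ∩ D).card := Finset.card_le_card hFsub
  -- 𝓖 ⊆ powerset \ (U ∪ D)
  have hGsub : 𝓖 ⊆ s.powerset \ (U ∪ D) := by
    intro G hG
    have hGs : G ∈ s.powerset := h𝓖 hG
    simp only [Finset.mem_sdiff, Finset.mem_union, hU, hD, Finset.mem_filter]
    refine ⟨hGs, ?_⟩
    rintro (⟨-, F, hF, hFG⟩ | ⟨-, F, hF, hGF⟩)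
    · exact (h F hF G hG).1 hFG
    · exact (h F hF G hG).2 hGF
  have hGle : 𝓖.card ≤ (s.powerset \ (U ∪ D)).card := Finset.card_le_card hGsub
  have hUDsub : U ∪ D ⊆ s.powerset := Finset.union_subset hUsub hDsub
  have hCcard : (s.powerset \ (U ∪ D)).card + (U ∪ D).card = 2 ^ n := by
    rw [Finset.card_sdiff_add_card_eq_card hUDsub, hNpow]
  have hUDi : (U ∪ D).card + (U ∩ D).card = U.card + D.card :=
    Finset.card_union_add_card_inter U D
  have hule : U.card ≤ 2 ^ n := by
    calc U.card ≤ s.powerset.card := Finset.card_le_card hUsub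
    _ = 2 ^ n := hNpow
  have hdle : D.card ≤ 2 ^ n := by
    calc D.card ≤ s.powerset.card := Finset.card_le_card hDsub
    _ = 2 ^ n := hNpow
  -- pass to integers and finish
  have hKz : ((2:ℤ) ^ n - U.card) * D.card ≤ (2:ℤ) ^ n * (D.card - (U ∩ D).card) := by
    have h1 : (Uc.card : ℤ) = 2 ^ n - U.card := by
      have := hUcCard; zify at this; linarith
    have h2 : ((Uc ∩ D).card : ℤ) = D.card - (U ∩ D).card := by
      rw [hUcD]
      have := hDUCard; zify at this; linarith
    have h3 : (Uc.card : ℤ) * D.card ≤ (2:ℤ) ^ n * ((Uc ∩ D).card : ℤ) := by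
      have := hK
      rw [hscard] at this
      exact_mod_cast this
    rw [h1, h2] at h3
    exact h3
  have hcEq : ((s.powerset \ (U ∪ D)).card : ℤ) + U.card + D.card
      = (2:ℤ) ^ n + (U ∩ D).card := by
    have e1 : ((s.powerset \ (U ∪ D)).card : ℤ) + ((U ∪ D).card : ℤ) = (2:ℤ) ^ n := by
      exact_mod_cast hCcard
    have e2 : ((U ∪ D).card : ℤ) + ((U ∩ D).card : ℤ)
        = (U.card : ℤ) + (D.card : ℤ) := by exact_mod_cast hUDi
    linarith
  have h16 : 16 * ((2:ℤ) ^ (2 * n - 4)) = (2:ℤ) ^ n * (2:ℤ) ^ n := by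
    rw [← pow_add]
    have : (16 : ℤ) = 2 ^ 4 := by norm_num
    rw [this, ← pow_add]
    congr 1
    omega
  have key := cross_sperner_int_aux ((2:ℤ) ^ n) U.card D.card ((U ∩ D).card)
    ((s.powerset \ (U ∪ D)).card) 𝓕.card 𝓖.card ((2:ℤ) ^ (2 * n - 4))
    (Int.natCast_nonneg _) (Int.natCast_nonneg _) (Int.natCast_nonneg _)
    (Int.natCast_nonneg _) (Int.natCast_nonneg _) (Int.natCast_nonneg _)
    (by positivity) (by exact_mod_cast hFle) (by exact_mod_cast hGle)
    (by exact_mod_cast hule) (by exact_mod_cast hdle) hKz hcEq h16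
  exact_mod_cast key
end

section
/- There exists an integer n₀ such that for all n' ≥ n₀ the following holds: if A is a nonempty downward closed family of subsets of [n'] and k is a positive integer with k ≥ n'/3, then |A| < Σ_{A ∈ A} Σ_{i=|A|+1}^{k} C(k, i), where C(k,i) denotes the binomial coefficient. -/
/-!
Write `W k j = ∑_{i=j+1}^{k} C(k, i)` (this is `binomialTail k j`) and `n = #N`. By double
counting, the level densities `#(𝒜 # j) / C(n, j)` of a down-set are non-increasing in `j`. The
weight `W k j - 1` is nonnegative for `j < k` and equals `-1` for `j ≥ k`, so if `𝒜` contains a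
`k`-set, the sum of `W k #A - 1` over `A ∈ 𝒜` is at least the density of `𝒜` at level `k` times
the same sum over the whole cube. By Vandermonde's identity the latter is
`∑_{t<k} C(n+k, t) - 2^n`, which is positive for `70 ≤ n ≤ 3k` because `8^(j+1) < C(4j+2, j)` for
`j ≥ 23`. If `𝒜` has no `k`-set, every weight is nonnegative and the empty set has weight
`2^k - 2 > 0`.
-/

open Finset Nat

def binomialTail (k j : ℕ) : ℕ := ∑ i ∈ Icc (j + 1) k, k.choose i

theorem binomialTail_eq_sum_range (k j : ℕ) :
    binomialTail k j = ∑ s ∈ range (k - j), k.choose s := by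
  refine sum_nbij' (fun i ↦ k - i) (fun s ↦ k - s) ?_ ?_ ?_ ?_ ?_ <;> intro i hi <;>
    simp only [mem_Icc, mem_range] at hi ⊢
  · omega
  · omega
  · omega
  · omega
  · exact (choose_symm hi.2).symm

theorem binomialTail_eq_zero {k j : ℕ} (h : k ≤ j) : binomialTail k j = 0 := by
  simp [binomialTail_eq_sum_range, Nat.sub_eq_zero_of_le h]

theorem one_le_binomialTail {k j : ℕ} (h : j < k) : 1 ≤ binomialTail k j := by
  rw [binomialTail_eq_sum_range]
  calc 1 = k.choose 0 := (choose_zero_right k).symm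
    _ ≤ _ := single_le_sum (fun _ _ ↦ Nat.zero_le _) (mem_range.2 (by omega))

theorem one_lt_binomialTail_zero {k : ℕ} (h : 2 ≤ k) : 1 < binomialTail k 0 := by
  rw [binomialTail_eq_sum_range, Nat.sub_zero]
  calc 1 < k := h
    _ = k.choose 1 := (choose_one_right k).symm
    _ ≤ _ := single_le_sum (fun _ _ ↦ Nat.zero_le _) (mem_range.2 (by omega))

theorem sum_choose_mul_binomialTail (n k : ℕ) :
    ∑ j ∈ range k, n.choose j * binomialTail k j = ∑ t ∈ range k, (n + k).choose t := by
  calc ∑ j ∈ range k, n.choose j * binomialTail k j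
      = ∑ j ∈ range k, ∑ s ∈ range (k - j), n.choose j * k.choose s := by
        simp_rw [binomialTail_eq_sum_range, mul_sum]
    _ = ∑ t ∈ range k, ∑ j ∈ range (t + 1), n.choose j * k.choose (t - j) :=
        (sum_range_diag_flip k fun j s ↦ n.choose j * k.choose s).symm
    _ = ∑ t ∈ range k, (n + k).choose t := by
        simp_rw [add_choose_eq, Nat.sum_antidiagonal_eq_sum_range_succ_mk]

theorem choose_four_mul_add_six_mul (j : ℕ) :
    (4 * j + 6).choose (j + 1) * ((j + 1) * (3 * j + 3) * (3 * j + 4) * (3 * j + 5)) =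
      (4 * j + 2).choose j * ((4 * j + 3) * (4 * j + 4) * (4 * j + 5) * (4 * j + 6)) := by
  have h₆ := choose_mul_factorial_mul_factorial (n := 4 * j + 6) (k := j + 1) (by omega)
  have h₂ := choose_mul_factorial_mul_factorial (n := 4 * j + 2) (k := j) (by omega)
  rw [show 4 * j + 6 - (j + 1) = 3 * j + 5 by omega] at h₆
  rw [show 4 * j + 2 - j = 3 * j + 2 by omega] at h₂
  have e₄ :
      (4 * j + 6)! = (4 * j + 3) * (4 * j + 4) * (4 * j + 5) * (4 * j + 6) * (4 * j + 2)! := by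
    simp [factorial_succ]; ring
  have e₃ : (3 * j + 5)! = (3 * j + 3) * (3 * j + 4) * (3 * j + 5) * (3 * j + 2)! := by
    simp [factorial_succ]; ring
  rw [e₄, e₃, factorial_succ, ← h₂] at h₆
  refine Nat.eq_of_mul_eq_mul_right (by positivity : 0 < j ! * (3 * j + 2)!) ?_
  linear_combination h₆

theorem eight_pow_lt_choose {j : ℕ} (hj : 23 ≤ j) : 8 ^ (j + 1) < (4 * j + 2).choose j := by
  induction j, hj using Nat.le_induction with
  | base => decide
  | succ j hj ih =>
    set D := (j + 1) * (3 * j + 3) * (3 * j + 4) * (3 * j + 5)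
    set U := (4 * j + 3) * (4 * j + 4) * (4 * j + 5) * (4 * j + 6)
    have hDU : 8 * D ≤ U := by simp only [D, U]; nlinarith [sq_nonneg j, hj]
    refine Nat.lt_of_mul_lt_mul_right (a := D) ?_
    calc 8 ^ (j + 1 + 1) * D = 8 ^ (j + 1) * (8 * D) := by ring
      _ < (4 * j + 2).choose j * (8 * D) := Nat.mul_lt_mul_of_pos_right ih (by positivity)
      _ ≤ (4 * j + 2).choose j * U := Nat.mul_le_mul_left _ hDU
      _ = (4 * (j + 1) + 2).choose (j + 1) * D := (choose_four_mul_add_six_mul j).symm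

theorem two_pow_lt_sum_range_choose {n k : ℕ} (hn : 70 ≤ n) (hnk : n ≤ 3 * k) :
    2 ^ n < ∑ t ∈ range k, (n + k).choose t := by
  set j := (n - 1) / 3
  calc 2 ^ n ≤ 2 ^ (3 * (j + 1)) := Nat.pow_le_pow_right (by norm_num) (by omega)
    _ = 8 ^ (j + 1) := by rw [pow_mul]; norm_num
    _ < (4 * j + 2).choose j := eight_pow_lt_choose (by omega)
    _ ≤ (n + k).choose j := choose_le_choose _ (by omega)
    _ ≤ ∑ t ∈ range k, (n + k).choose t :=
        single_le_sum (fun _ _ ↦ Nat.zero_le _) (mem_range.2 (by omega))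

section LowerSet

variable {α : Type*} [DecidableEq α] {N : Finset α} {𝒜 : Finset (Finset α)}

theorem card_slice_mul_choose_le (hN : 𝒜 ⊆ N.powerset) (h𝒜 : IsLowerSet (𝒜 : Set (Finset α)))
    (j m : ℕ) : #(𝒜 # m) * m.choose j ≤ #(𝒜 # j) * (#N - j).choose (m - j) := by
  refine card_mul_le_card_mul (fun B A ↦ A ⊆ B) (fun B hB ↦ ?_) (fun A hA ↦ ?_)
  · rw [mem_slice] at hB
    calc m.choose j = #(B.powersetCard j) := by rw [card_powersetCard, hB.2]
      _ ≤ _ := card_le_card fun A hA ↦ by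
        rw [mem_powersetCard] at hA
        exact (mem_bipartiteAbove _).2 ⟨mem_slice.2 ⟨h𝒜 hA.1 hB.1, hA.2⟩, hA.1⟩
  · rw [mem_slice] at hA
    have hAN : A ⊆ N := mem_powerset.1 (hN hA.1)
    calc #((𝒜 # m).bipartiteBelow (fun B A ↦ A ⊆ B) A) ≤ #((N \ A).powersetCard (m - j)) := by
          refine card_le_card_of_injOn (· \ A) (fun B hB ↦ ?_) (fun B₁ hB₁ B₂ hB₂ h ↦ ?_)
          · obtain ⟨hB, hAB⟩ := (mem_bipartiteBelow _).1 hB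
            rw [mem_slice] at hB
            rw [mem_coe, mem_powersetCard, card_sdiff_of_subset hAB, hB.2, hA.2]
            exact ⟨sdiff_subset_sdiff (mem_powerset.1 (hN hB.1)) le_rfl, rfl⟩
          · rw [← sdiff_union_of_subset ((mem_bipartiteBelow _).1 hB₁).2,
              ← sdiff_union_of_subset ((mem_bipartiteBelow _).1 hB₂).2]
            exact congrArg (· ∪ A) h
      _ = (#N - j).choose (m - j) := by rw [card_powersetCard, card_sdiff_of_subset hAN, hA.2]

theorem card_slice_mul_choose_le_card_slice_mul_choose (hN : 𝒜 ⊆ N.powerset)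
    (h𝒜 : IsLowerSet (𝒜 : Set (Finset α))) {j m : ℕ} (hjm : j ≤ m) :
    #(𝒜 # m) * (#N).choose j ≤ #(𝒜 # j) * (#N).choose m := by
  refine Nat.le_of_mul_le_mul_right ?_ (choose_pos hjm)
  calc #(𝒜 # m) * (#N).choose j * m.choose j = (#N).choose j * (#(𝒜 # m) * m.choose j) := by ring
    _ ≤ (#N).choose j * (#(𝒜 # j) * (#N - j).choose (m - j)) :=
        Nat.mul_le_mul_left _ (card_slice_mul_choose_le hN h𝒜 j m)
    _ = #(𝒜 # j) * ((#N).choose m * m.choose j) := by rw [choose_mul hjm]; ring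
    _ = #(𝒜 # j) * (#N).choose m * m.choose j := by ring

theorem sum_comp_card_pos_of_sum_choose_mul_pos (hN : 𝒜 ⊆ N.powerset)
    (h𝒜 : IsLowerSet (𝒜 : Set (Finset α))) {k : ℕ} (hk : (𝒜 # k).Nonempty) (w : ℕ → ℤ)
    (hw_lt : ∀ j < k, 0 ≤ w j) (hw_ge : ∀ j, k ≤ j → w j ≤ 0)
    (hpos : 0 < ∑ j ∈ range (#N + 1), ((#N).choose j : ℤ) * w j) :
    0 < ∑ A ∈ 𝒜, w #A := by
  have hcard : ∀ A ∈ 𝒜, #A ≤ #N := fun A hA ↦ card_le_card (mem_powerset.1 (hN hA))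
  obtain ⟨B, hB⟩ := hk
  have hc : 0 < (#N).choose k := choose_pos ((mem_slice.1 hB).2 ▸ hcard B (mem_slice.1 hB).1)
  have hak : (0 : ℤ) < #(𝒜 # k) := by exact_mod_cast card_pos.2 ⟨B, hB⟩
  have hfiber : ∑ A ∈ 𝒜, w #A = ∑ j ∈ range (#N + 1), (#(𝒜 # j) : ℤ) * w j := by
    rw [← sum_fiberwise_of_maps_to' fun A hA ↦ mem_range.2 (Nat.lt_succ_of_le (hcard A hA))]
    simp only [sum_const, nsmul_eq_mul]
    rfl
  have hterm : ∀ j ∈ range (#N + 1),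
      (#(𝒜 # k) : ℤ) * ((#N).choose j * w j) ≤ (#N).choose k * (#(𝒜 # j) * w j) := by
    intro j _
    rcases lt_or_ge j k with hjk | hkj
    · have h : (#(𝒜 # k) * (#N).choose j : ℤ) ≤ #(𝒜 # j) * (#N).choose k := by
        exact_mod_cast card_slice_mul_choose_le_card_slice_mul_choose hN h𝒜 hjk.le
      nlinarith [hw_lt j hjk]
    · have h : (#(𝒜 # j) * (#N).choose k : ℤ) ≤ #(𝒜 # k) * (#N).choose j := by
        exact_mod_cast card_slice_mul_choose_le_card_slice_mul_choose hN h𝒜 hkj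
      nlinarith [hw_ge j hkj]
  refine pos_of_mul_pos_right (a := ((#N).choose k : ℤ)) ?_ (mod_cast hc.le)
  calc 0 < (#(𝒜 # k) : ℤ) * ∑ j ∈ range (#N + 1), ((#N).choose j : ℤ) * w j := mul_pos hak hpos
    _ ≤ (#N).choose k * ∑ j ∈ range (#N + 1), (#(𝒜 # j) : ℤ) * w j := by
        rw [mul_sum, mul_sum]; exact sum_le_sum hterm
    _ = (#N).choose k * ∑ A ∈ 𝒜, w #A := by rw [hfiber]

theorem card_lt_sum_binomialTail (hN : 𝒜 ⊆ N.powerset) (h𝒜 : IsLowerSet (𝒜 : Set (Finset α)))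
    (hne : 𝒜.Nonempty) {k : ℕ} (hk : 2 ^ #N < ∑ t ∈ range k, (#N + k).choose t) :
    #𝒜 < ∑ A ∈ 𝒜, binomialTail k #A := by
  suffices 0 < ∑ A ∈ 𝒜, ((binomialTail k #A : ℤ) - 1) by
    rw [sum_sub_distrib, sum_const, nsmul_one, sub_pos] at this
    exact_mod_cast this
  by_cases hslice : (𝒜 # k).Nonempty
  · refine sum_comp_card_pos_of_sum_choose_mul_pos hN h𝒜 hslice
      (fun j ↦ (binomialTail k j : ℤ) - 1)
      (fun j hj ↦ sub_nonneg.2 (mod_cast one_le_binomialTail hj))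
      (fun j hj ↦ by simp [binomialTail_eq_zero hj]) ?_
    have hkN : k ≤ #N := by
      obtain ⟨B, hB⟩ := hslice
      rw [mem_slice] at hB
      exact hB.2 ▸ card_le_card (mem_powerset.1 (hN hB.1))
    have hsum : ∑ j ∈ range (#N + 1), (#N).choose j * binomialTail k j =
        ∑ t ∈ range k, (#N + k).choose t := by
      rw [← sum_choose_mul_binomialTail]
      refine (sum_subset (range_subset_range.2 (by omega)) fun j _ hj ↦ ?_).symm
      rw [binomialTail_eq_zero (by simpa using hj), mul_zero]
    simp only [mul_sub, mul_one, sum_sub_distrib, sub_pos]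
    exact_mod_cast (Nat.sum_range_choose (#N)).trans_lt (hsum ▸ hk)
  · have hsmall : ∀ A ∈ 𝒜, #A < k := fun A hA ↦ by
      by_contra! h
      obtain ⟨B, hBA, hB⟩ := exists_subset_card_eq h
      exact hslice ⟨B, mem_slice.2 ⟨h𝒜 hBA hA, hB⟩⟩
    have hk2 : 2 ≤ k := by
      by_contra!
      interval_cases k <;> simp at hk
    obtain ⟨A, hA⟩ := hne
    refine sum_pos' (fun A hA ↦ sub_nonneg.2 (mod_cast one_le_binomialTail (hsmall A hA)))
      ⟨∅, h𝒜 (empty_subset A) hA, ?_⟩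
    rw [card_empty, sub_pos]
    exact_mod_cast one_lt_binomialTail_zero hk2

end LowerSet

theorem downward_closed_shadow_sum :
    ∃ n₀ : ℕ, ∀ n' : ℕ, n₀ ≤ n' →
      ∀ 𝓐 : Finset (Finset ℕ), 𝓐 ⊆ (Finset.Icc 1 n').powerset → 𝓐.Nonempty →
        (∀ A ∈ 𝓐, ∀ B : Finset ℕ, B ⊆ A → B ∈ 𝓐) →
        ∀ k : ℕ, 0 < k → n' ≤ 3 * k →
          𝓐.card < ∑ A ∈ 𝓐, ∑ i ∈ Finset.Icc (A.card + 1) k, Nat.choose k i := by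
  refine ⟨70, fun n hn 𝒜 hN hne hdc k _ hnk ↦ ?_⟩
  have hcard : #(Icc 1 n) = n := by simp
  refine card_lt_sum_binomialTail hN (fun A B hBA hA ↦ hdc A hA B hBA) hne ?_
  rw [hcard]
  exact two_pow_lt_sum_range_choose hn hnk
end

section
/- For n ≥ 2: (i) if (F,G) is a cross-Sperner pair of families of subsets of [n] with |F| = 2^(n−2), then |G| ≤ 2^(n−2); (ii) there exists a cross-Sperner pair (F,G) of families of subsets of [n] with |F| = 2^(n−2) and |G| = 2^(n−2). In other words, F(n, 2^(n−2)) = 2^(n−2). -/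
open Finset

theorem sixteen_mul_mul_le_sq {R : Type*} [CommRing R] [LinearOrder R] [IsStrictOrderedRing R]
    {m g d l i N : R} (hm : 0 ≤ m) (hg : 0 ≤ g) (hi : 0 ≤ i) (hN : 0 < N)
    (hl : l ≤ N) (hmd : m + i ≤ d) (hgl : g + i ≤ l) (hdl : d * l ≤ N * i) :
    16 * (m * g) ≤ N ^ 2 := by
  have hNm : N * m ≤ d * (N - l) := by nlinarith
  have hNg : N * g ≤ l * (N - d) := by nlinarith
  have hdN : 4 * d * (N - d) ≤ N ^ 2 := by simpa using four_mul_le_sq_add d (N - d)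
  have hlN : 4 * l * (N - l) ≤ N ^ 2 := by simpa using four_mul_le_sq_add l (N - l)
  have key : N ^ 2 * (16 * (m * g)) ≤ N ^ 2 * N ^ 2 :=
    calc N ^ 2 * (16 * (m * g)) = 16 * ((N * m) * (N * g)) := by ring
      _ ≤ 16 * ((d * (N - l)) * (l * (N - d))) := by
        gcongr
        exact (mul_nonneg hN.le hm).trans hNm
      _ = (4 * d * (N - d)) * (4 * l * (N - l)) := by ring
      _ ≤ N ^ 2 * N ^ 2 := by
        gcongr
        nlinarith
  exact le_of_mul_le_mul_left key (by positivity)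

variable {α : Type*} [DecidableEq α]

theorem card_mul_card_le_of_crossSperner {s : Finset α} {𝓕 𝓖 : Finset (Finset α)}
    (h𝓕 : 𝓕 ⊆ s.powerset) (h𝓖 : 𝓖 ⊆ s.powerset)
    (h : ∀ F ∈ 𝓕, ∀ G ∈ 𝓖, ¬ F ⊆ G ∧ ¬ G ⊆ F) :
    16 * (#𝓕 * #𝓖) ≤ (2 ^ #s) ^ 2 := by
  set 𝓓 := s.powerset.filter fun S => ∃ F ∈ 𝓕, S ⊆ F
  set 𝓛 := s.powerset.filter fun S => ∀ F ∈ 𝓕, ¬ F ⊆ S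
  have h𝓓 : IsLowerSet (𝓓 : Set (Finset α)) := by
    rintro S T hTS hS
    simp only [𝓓, mem_coe, mem_filter, mem_powerset] at hS ⊢
    obtain ⟨hSs, F, hF, hSF⟩ := hS
    exact ⟨hTS.trans hSs, F, hF, hTS.trans hSF⟩
  have h𝓛 : IsLowerSet (𝓛 : Set (Finset α)) := by
    rintro S T hTS hS
    simp only [𝓛, mem_coe, mem_filter, mem_powerset] at hS ⊢
    exact ⟨hTS.trans hS.1, fun F hF hFT => hS.2 F hF (hFT.trans hTS)⟩
  have hHK : #𝓓 * #𝓛 ≤ 2 ^ #s * #(𝓓 ∩ 𝓛) :=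
    h𝓓.le_card_inter_finset' h𝓛 (fun _ hS => mem_powerset.1 (mem_filter.1 hS).1)
      (fun _ hS => mem_powerset.1 (mem_filter.1 hS).1)
  have h𝓕𝓓 : 𝓕 ⊆ 𝓓 \ 𝓛 := fun F hF => by
    simp only [𝓓, 𝓛, mem_sdiff, mem_filter, not_and, not_forall, not_not]
    exact ⟨⟨h𝓕 hF, F, hF, subset_rfl⟩, fun _ => ⟨F, hF, subset_rfl⟩⟩
  have h𝓖𝓛 : 𝓖 ⊆ 𝓛 \ 𝓓 := fun G hG => by
    simp only [𝓓, 𝓛, mem_sdiff, mem_filter, not_and, not_exists]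
    exact ⟨⟨h𝓖 hG, fun F hF => (h F hF G hG).1⟩, fun _ F hF => (h F hF G hG).2⟩
  have hm : #𝓕 + #(𝓓 ∩ 𝓛) ≤ #𝓓 :=
    (add_le_add_left (card_le_card h𝓕𝓓) _).trans_eq (card_sdiff_add_card_inter _ _)
  have hg : #𝓖 + #(𝓓 ∩ 𝓛) ≤ #𝓛 := by
    rw [inter_comm]
    exact (add_le_add_left (card_le_card h𝓖𝓛) _).trans_eq (card_sdiff_add_card_inter _ _)
  have hl : #𝓛 ≤ 2 ^ #s := (card_filter_le _ _).trans_eq (card_powerset s)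
  have := sixteen_mul_mul_le_sq (m := (#𝓕 : ℤ)) (g := #𝓖) (d := #𝓓) (l := #𝓛)
    (i := #(𝓓 ∩ 𝓛)) (N := 2 ^ #s) (by positivity) (by positivity) (by positivity)
    (by positivity) (by exact_mod_cast hl) (by exact_mod_cast hm)
    (by exact_mod_cast hg) (by exact_mod_cast hHK)
  exact_mod_cast this

theorem not_insert_subset_insert {a b : α} {S T : Finset α} (hab : a ≠ b) (haT : a ∉ T) :
    ¬ insert a S ⊆ insert b T := fun hST =>
  (mem_insert.1 (hST (mem_insert_self a S))).elim hab haT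

theorem card_image_insert_powerset {a : α} {B : Finset α} (ha : a ∉ B) :
    #(B.powerset.image (insert a)) = 2 ^ #B := by
  rw [card_image_of_injOn, card_powerset]
  intro S hS T hT hST
  have haS : a ∉ S := fun h => ha (mem_powerset.1 hS h)
  have haT : a ∉ T := fun h => ha (mem_powerset.1 hT h)
  rw [← erase_insert haS, ← erase_insert haT]
  exact congrArg (erase · a) hST

theorem image_insert_powerset_subset_powerset {a : α} {B s : Finset α} (ha : a ∈ s)
    (hB : B ⊆ s) : B.powerset.image (insert a) ⊆ s.powerset := by
  intro F hF
  obtain ⟨S, hS, rfl⟩ := mem_image.1 hF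
  exact mem_powerset.2 (insert_subset ha ((mem_powerset.1 hS).trans hB))

theorem crossSperner_image_insert_powerset {a b : α} {B : Finset α} (hab : a ≠ b)
    (ha : a ∉ B) (hb : b ∉ B) :
    ∀ F ∈ B.powerset.image (insert a), ∀ G ∈ B.powerset.image (insert b),
      ¬ F ⊆ G ∧ ¬ G ⊆ F := by
  simp only [mem_image, mem_powerset]
  rintro _ ⟨S, hS, rfl⟩ _ ⟨T, hT, rfl⟩
  exact ⟨not_insert_subset_insert hab fun h => ha (hT h),
    not_insert_subset_insert hab.symm fun h => hb (hS h)⟩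

theorem cross_sperner_F_n_2_pow (n : ℕ) (hn : 2 ≤ n) :
    (∀ 𝓕 𝓖 : Finset (Finset ℕ),
      𝓕 ⊆ (Finset.Icc 1 n).powerset → 𝓖 ⊆ (Finset.Icc 1 n).powerset →
      CrossSperner 𝓕 𝓖 → 𝓕.card = 2 ^ (n - 2) → 𝓖.card ≤ 2 ^ (n - 2)) ∧
    (∃ 𝓕 𝓖 : Finset (Finset ℕ),
      𝓕 ⊆ (Finset.Icc 1 n).powerset ∧ 𝓖 ⊆ (Finset.Icc 1 n).powerset ∧
      CrossSperner 𝓕 𝓖 ∧ 𝓕.card = 2 ^ (n - 2) ∧ 𝓖.card = 2 ^ (n - 2)) := by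
  obtain ⟨k, rfl⟩ : ∃ k, n = k + 2 := ⟨n - 2, by omega⟩
  simp only [Nat.add_sub_cancel]
  constructor
  · intro 𝓕 𝓖 h𝓕 h𝓖 hcs hcard
    have := card_mul_card_le_of_crossSperner h𝓕 h𝓖 hcs
    rw [hcard, Nat.card_Icc, Nat.add_sub_cancel, pow_add] at this
    nlinarith [Nat.one_le_two_pow (n := k)]
  · have h1 : 1 ∉ Icc 3 (k + 2) := by simp
    have h2 : 2 ∉ Icc 3 (k + 2) := by simp
    have hB : Icc 3 (k + 2) ⊆ Icc 1 (k + 2) := Icc_subset_Icc_left (by norm_num)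
    have hcard : #(Icc 3 (k + 2)) = k := by simp
    refine ⟨_, _, image_insert_powerset_subset_powerset (by simp) hB,
      image_insert_powerset_subset_powerset (by simp) hB,
      crossSperner_image_insert_powerset (by norm_num) h1 h2, ?_, ?_⟩
    · rw [card_image_insert_powerset h1, hcard]
    · rw [card_image_insert_powerset h2, hcard]
end

section
/- Let n ≥ 2, k ≥ 2, and let F₁, F₂, ..., F_k be families of subsets of [n] forming a cross-Sperner k-tuple. Then Π_{i=1}^{k} |F_i| ≤ 2^(kn − 2k). -/
/-- Families `𝓕 0, ..., 𝓕 (k-1)` form a cross-Sperner `k`-tuple if for all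
indices `i ≠ j` there is no pair `F ∈ 𝓕 i`, `F' ∈ 𝓕 j` with `F ⊆ F'` or `F' ⊆ F`. -/
def CrossSpernerTuple {k : ℕ} (𝓕 : Fin k → Finset (Finset ℕ)) : Prop :=
  ∀ i j : Fin k, i ≠ j → ∀ F ∈ 𝓕 i, ∀ F' ∈ 𝓕 j, ¬ F ⊆ F' ∧ ¬ F' ⊆ F

theorem cross_sperner_tuple_product_bound (n k : ℕ) (hn : 2 ≤ n) (hk : 2 ≤ k)
    (𝓕 : Fin k → Finset (Finset ℕ))
    (h𝓕 : ∀ i, 𝓕 i ⊆ (Finset.Icc 1 n).powerset)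
    (h : CrossSpernerTuple 𝓕) :
    ∏ i : Fin k, (𝓕 i).card ≤ 2 ^ (k * n - 2 * k) := by
  classical
  haveI : NeZero k := ⟨by omega⟩
  obtain ⟨m, hm⟩ : ∃ m, n = m + 2 := ⟨n - 2, by omega⟩
  set α := {x : ℕ // x ∈ Finset.Icc 1 n} with hα
  have hcardα : Fintype.card α = n := by
    show Fintype.card ↥(Finset.Icc 1 n) = n
    rw [Fintype.card_coe, Nat.card_Icc]; omega
  -- embedding of subsets of Icc 1 n into Finset α
  set ι : Finset ℕ → Finset α := fun F => F.subtype (· ∈ Finset.Icc 1 n) with hι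
  have hmemι : ∀ (F : Finset ℕ) (a : α), a ∈ ι F ↔ (a : ℕ) ∈ F := by
    intro F a; exact Finset.mem_subtype
  have hback : ∀ F F' : Finset ℕ, F ⊆ Finset.Icc 1 n → ι F ⊆ ι F' → F ⊆ F' := by
    intro F F' hF hsub x hx
    have hxI : x ∈ Finset.Icc 1 n := hF hx
    have : (⟨x, hxI⟩ : α) ∈ ι F := (hmemι F _).2 hx
    exact (hmemι F' _).1 (hsub this)
  set 𝓖 : Fin k → Finset (Finset α) := fun i => (𝓕 i).image ι with h𝓖
  have hsubI : ∀ i, ∀ F ∈ 𝓕 i, F ⊆ Finset.Icc 1 n := by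
    intro i F hF; exact Finset.mem_powerset.1 (h𝓕 i hF)
  have hcard𝓖 : ∀ i, (𝓖 i).card = (𝓕 i).card := by
    intro i
    apply Finset.card_image_of_injOn
    intro F hF F' hF' hEq
    exact Finset.Subset.antisymm
      (hback F F' (hsubI i F hF) (le_of_eq hEq))
      (hback F' F (hsubI i F' hF') (le_of_eq hEq.symm))
  -- cross-Sperner property transfers
  have hcross : ∀ i j : Fin k, i ≠ j → ∀ S ∈ 𝓖 i, ∀ T ∈ 𝓖 j, ¬ S ⊆ T ∧ ¬ T ⊆ S := by
    intro i j hij S hS T hT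
    obtain ⟨F, hF, rfl⟩ := Finset.mem_image.1 hS
    obtain ⟨F', hF', rfl⟩ := Finset.mem_image.1 hT
    obtain ⟨h1, h2⟩ := h i j hij F hF F' hF'
    exact ⟨fun hc => h1 (hback F F' (hsubI i F hF) hc),
           fun hc => h2 (hback F' F (hsubI j F' hF') hc)⟩
  -- lower and upper auxiliary families
  set A : Fin k → Finset (Finset α) := fun i =>
    Finset.univ.filter (fun S : Finset α =>
      (∃ F ∈ 𝓖 i, S ⊆ F) ∧ ∀ j, j ≠ i → ∀ F ∈ 𝓖 j, ¬ F ⊆ S) with hA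
  set B : Fin k → Finset (Finset α) := fun i =>
    Finset.univ.filter (fun S : Finset α =>
      (∃ F ∈ 𝓖 i, F ⊆ S) ∧ ∀ j, j ≠ i → ∀ F ∈ 𝓖 j, ¬ S ⊆ F) with hB
  have hAlower : ∀ i, IsLowerSet ((A i : Set (Finset α))) := by
    intro i S T hTS hS
    simp only [hA, Finset.coe_filter, Set.mem_setOf_eq, Finset.mem_univ, true_and] at hS ⊢
    obtain ⟨⟨F, hF, hSF⟩, hforall⟩ := hS
    exact ⟨⟨F, hF, hTS.trans hSF⟩, fun j hj F' hF' hc => hforall j hj F' hF' (hc.trans hTS)⟩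
  have hBupper : ∀ i, IsUpperSet ((B i : Set (Finset α))) := by
    intro i S T hST hS
    simp only [hB, Finset.coe_filter, Set.mem_setOf_eq, Finset.mem_univ, true_and] at hS ⊢
    obtain ⟨⟨F, hF, hFS⟩, hforall⟩ := hS
    exact ⟨⟨F, hF, hFS.trans hST⟩, fun j hj F' hF' hc => hforall j hj F' hF' (hST.trans hc)⟩
  have h𝓖sub : ∀ i, 𝓖 i ⊆ A i ∩ B i := by
    intro i S hS
    refine Finset.mem_inter.2 ⟨?_, ?_⟩
    · simp only [hA, Finset.mem_filter, Finset.mem_univ, true_and]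
      exact ⟨⟨S, hS, Finset.Subset.refl S⟩,
        fun j hj F hF hc => ((hcross j i hj F hF S hS).1 hc).elim⟩
    · simp only [hB, Finset.mem_filter, Finset.mem_univ, true_and]
      exact ⟨⟨S, hS, Finset.Subset.refl S⟩,
        fun j hj F hF hc => ((hcross j i hj F hF S hS).2 hc).elim⟩
  -- Kleitman step
  have hKleit : ∀ i, 2 ^ n * (𝓖 i).card ≤ (A i).card * (B i).card := by
    intro i
    calc 2 ^ n * (𝓖 i).card ≤ 2 ^ n * ((A i) ∩ (B i)).card :=
          Nat.mul_le_mul_left _ (Finset.card_le_card (h𝓖sub i))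
      _ = 2 ^ Fintype.card α * ((A i) ∩ (B i)).card := by rw [hcardα]
      _ ≤ (A i).card * (B i).card := (hAlower i).card_inter_le_finset (hBupper i)
  -- disjointness by cyclic shift
  have hne : ∀ i : Fin k, i + 1 ≠ i := by
    intro i hc
    have h2 : ((i : ℕ) + (1 : Fin k).val) % k = (i : ℕ) := by
      have := congrArg Fin.val hc
      rwa [Fin.val_add] at this
    rw [Fin.val_one' k, Nat.mod_eq_of_lt (show 1 < k by omega)] at h2
    have hik := i.isLt
    rcases Nat.lt_or_ge ((i : ℕ) + 1) k with hlt | hge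
    · rw [Nat.mod_eq_of_lt hlt] at h2; omega
    · have hik2 : (i : ℕ) + 1 = k := by omega
      rw [hik2, Nat.mod_self] at h2; omega
  have hpair : ∀ i : Fin k, (A i).card * (B (i + 1)).card ≤ 2 ^ (2 * n - 2) := by
    intro i
    have hdisj : Disjoint (A i) (B (i + 1)) := by
      rw [Finset.disjoint_left]
      intro S hSA hSB
      simp only [hA, Finset.mem_filter, Finset.mem_univ, true_and] at hSA
      simp only [hB, Finset.mem_filter, Finset.mem_univ, true_and] at hSB
      obtain ⟨⟨F, hF, hFS⟩, _⟩ := hSB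
      exact hSA.2 (i + 1) (hne i) F hF hFS
    have hsum : (A i).card + (B (i + 1)).card ≤ 2 ^ n := by
      rw [← Finset.card_union_of_disjoint hdisj]
      calc ((A i) ∪ (B (i + 1))).card ≤ Fintype.card (Finset α) :=
            Finset.card_le_univ _
        _ = 2 ^ n := by rw [Fintype.card_finset, hcardα]
    have h4 : 4 * ((A i).card * (B (i + 1)).card) ≤ 2 ^ n * 2 ^ n := by
      have hs : 4 * ((A i).card * (B (i + 1)).card) ≤
          ((A i).card + (B (i + 1)).card) * ((A i).card + (B (i + 1)).card) := by
        nlinarith [two_mul_le_add_sq (A i).card ((B (i + 1)).card)]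
      exact hs.trans (Nat.mul_le_mul hsum hsum)
    have heq : 2 ^ n * 2 ^ n = 4 * 2 ^ (2 * n - 2) := by
      rw [← pow_add]
      have hnn : n + n = 2 + (2 * n - 2) := by omega
      rw [hnn, pow_add]; norm_num
    rw [heq] at h4
    exact Nat.le_of_mul_le_mul_left h4 (by norm_num)
  -- putting it together
  have hGF : ∏ i, (𝓖 i).card = ∏ i, (𝓕 i).card :=
    Finset.prod_congr rfl fun i _ => hcard𝓖 i
  have key : 2 ^ (k * n) * ∏ i, (𝓕 i).card ≤ 2 ^ (k * n) * 2 ^ (k * n - 2 * k) := by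
    calc 2 ^ (k * n) * ∏ i, (𝓕 i).card
        = ∏ i : Fin k, (2 ^ n * (𝓖 i).card) := by
          rw [Finset.prod_mul_distrib, Finset.prod_const, Finset.card_univ,
            Fintype.card_fin, ← pow_mul, hGF, Nat.mul_comm n k]
      _ ≤ ∏ i : Fin k, ((A i).card * (B i).card) :=
          Finset.prod_le_prod' fun i _ => hKleit i
      _ = (∏ i : Fin k, (A i).card) * ∏ i : Fin k, (B i).card :=
          Finset.prod_mul_distrib
      _ = (∏ i : Fin k, (A i).card) * ∏ i : Fin k, (B (i + 1)).card := by
          congr 1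
          exact (Fintype.prod_equiv (Equiv.addRight (1 : Fin k))
            (fun i => (B (i + 1)).card) (fun i => (B i).card) (fun i => by simp)).symm
      _ = ∏ i : Fin k, ((A i).card * (B (i + 1)).card) :=
          Finset.prod_mul_distrib.symm
      _ ≤ ∏ _i : Fin k, 2 ^ (2 * n - 2) :=
          Finset.prod_le_prod' fun i _ => hpair i
      _ = 2 ^ ((2 * n - 2) * k) := by
          rw [Finset.prod_const, Finset.card_univ, Fintype.card_fin, ← pow_mul]
      _ = 2 ^ (k * n) * 2 ^ (k * n - 2 * k) := by
          rw [← pow_add]; congr 1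
          have e1 : 2 * n - 2 = 2 * m + 2 := by omega
          have e2 : k * n - 2 * k = k * m := by
            rw [hm, Nat.mul_add]; omega
          rw [e1, e2, hm, Nat.mul_add]; ring
  exact Nat.le_of_mul_le_mul_left key (by positivity)
end
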